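/- arXiv:2306.12158 — 8 statements merged into one kernel-verified Lean document; each statement's English description precedes it below -/
import Mathlib

section
/- For every n ≥ 1, there exists a Stirling permutation w of order n with exactly ⌊(2n−1)/3⌋ mesas. -/
/-- `w` (read on positions `1,…,2n`) is a Stirling permutation of order `n`:
each value `1,…,n` appears exactly twice, all letters lie in `[1,n]`, and every
value between the two copies of a value exceeds it. -/
def IsStirling (n : ℕ) (w : ℕ → ℕ) : Prop :=
  (∀ k, 1 ≤ k → k ≤ n → ((Finset.Icc 1 (2*n)).filter (fun i => w i = k)).card = 2) ∧
  (∀ i, 1 ≤ i → i ≤ 2*n → 1 ≤ w i ∧ w i ≤ n) ∧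
  (∀ i j l, 1 ≤ i → i < j → j < l → l ≤ 2*n → w i = w l → w i < w j)

/-- The set of mesas of `w`: values `m` with `w(i-1) < w(i) = w(i+1) = m > w(i+2)`
for some `2 ≤ i ≤ 2n-2`. -/
def MesaSet (n : ℕ) (w : ℕ → ℕ) : Set ℕ :=
  {m | ∃ i, 2 ≤ i ∧ i + 2 ≤ 2*n ∧ w (i-1) < w i ∧ w i = w (i+1) ∧ w (i+2) < w i ∧ w i = m}

/-- The collection of admissible mesa sets of order `n`. -/
def AMS (n : ℕ) : Set (Set ℕ) := {M | ∃ w, IsStirling n w ∧ MesaSet n w = M}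

/-- explicit extremal Stirling permutation -/
def Wf (n i : ℕ) : ℕ :=
  if i % 3 ≠ 1 ∧ i ≤ 3 * ((2*n-1)/3) then n - (2*n-1)/3 + (i+1)/3
  else ((if i ≤ 3 * ((2*n-1)/3) then (i+2)/3 else i - 2*((2*n-1)/3)) + 1)/2

lemma filter_pair (n v a b : ℕ) (hab : a ≠ b)
    (h : ∀ i, (1 ≤ i ∧ i ≤ 2*n ∧ Wf n i = v) ↔ (i = a ∨ i = b)) :
    ((Finset.Icc 1 (2*n)).filter (fun i => Wf n i = v)).card = 2 := by
  have : ((Finset.Icc 1 (2*n)).filter (fun i => Wf n i = v)) = {a, b} := by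
    ext i
    simp only [Finset.mem_filter, Finset.mem_Icc, Finset.mem_insert, Finset.mem_singleton]
    rw [← h i]; tauto
  rw [this, Finset.card_pair hab]

set_option maxHeartbeats 2000000 in
theorem exists_max_mesa (n : ℕ) (hn : 1 ≤ n) :
    ∃ w : ℕ → ℕ, IsStirling n w ∧ (MesaSet n w).ncard = (2*n - 1) / 3 := by
  refine ⟨Wf n, ⟨?_, ?_, ?_⟩, ?_⟩
  · -- each value appears exactly twice
    intro v hv1 hv2
    rcases Nat.lt_or_ge (n - (2*n-1)/3) v with hbig | hsmall
    · exact filter_pair n v (3*(v-(n-(2*n-1)/3))-1) (3*(v-(n-(2*n-1)/3))) (by omega)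
        (fun i => by simp only [Wf]; split_ifs <;> omega)
    · rcases Nat.lt_or_ge ((2*n-1)/3) (2*v-1) with hC | hAB
      · exact filter_pair n v (2*((2*n-1)/3)+2*v-1) (2*((2*n-1)/3)+2*v) (by omega)
          (fun i => by simp only [Wf]; split_ifs <;> omega)
      · rcases Nat.lt_or_ge ((2*n-1)/3) (2*v) with hB | hA
        · exact filter_pair n v (6*v-5) (2*((2*n-1)/3)+2*v) (by omega)
            (fun i => by simp only [Wf]; split_ifs <;> omega)
        · exact filter_pair n v (6*v-5) (6*v-2) (by omega)
            (fun i => by simp only [Wf]; split_ifs <;> omega)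
  · -- values in range
    intro i h1 h2
    simp only [Wf]; split_ifs <;> omega
  · -- Stirling "between" property
    intro i j l h1 h2 h3 h4 h5
    simp only [Wf] at h5 ⊢
    split_ifs at h5 ⊢ <;> omega
  · -- mesa count
    have hmesa : MesaSet n (Wf n) = ↑(Finset.Icc (n - (2*n-1)/3 + 1) n) := by
      ext m
      simp only [MesaSet, Set.mem_setOf_eq, Finset.coe_Icc, Set.mem_Icc]
      constructor
      · rintro ⟨i, h2i, hi2n, hlt1, heq, hlt2, rfl⟩
        simp only [Wf] at hlt1 heq hlt2 ⊢
        split_ifs at hlt1 heq hlt2 ⊢ <;> omega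
      · intro hm
        refine ⟨3*(m - (n - (2*n-1)/3)) - 1, by omega, by omega, ?_, ?_, ?_, ?_⟩ <;>
          · simp only [Wf]; split_ifs <;> omega
    rw [hmesa, Set.ncard_coe_finset, Nat.card_Icc]
    omega
end

section
/- A finite set M of positive integers is an admissible mesa set (i.e., M = Mesa(w) for some Stirling permutation w) if and only if for every x ∈ M, |M ∩ [1,x]| ≤ (2x−1)/3. -/
/-!
Forward direction: in a Stirling permutation the triples of letters `w i, w (i+1), w (i+2)`
of two mesa positions `i` cannot overlap, and the letter just before the leftmost mesa is
smaller than that mesa. If the mesas are at most `x`, this gives `3k + 1` positions carrying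
letters in `[1, x]`, where `k` counts these mesas, while only `2x` such positions exist.

Backward direction: let `m₁ < m₂ < ⋯` be the elements of `M` and `g₁ < g₂ < ⋯` the other
values in `[1, n]`. The word `g₁ m₁ m₁ g₁ m₂ m₂ g₂ m₃ m₃ g₂ m₄ m₄ g₃ ⋯`, followed by `g g` for
each remaining `g`, is a Stirling permutation whose mesas are exactly the `mᵢ` as soon as
`g_{⌊i/2⌋+1} < mᵢ`. Since `mᵢ - i` values below `mᵢ` are not in `M`, this is what the density
condition `3i ≤ 2mᵢ - 1` says.
-/

namespace StirlingPermutation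

def IsMesaPos (n : ℕ) (w : ℕ → ℕ) (i : ℕ) : Prop :=
  2 ≤ i ∧ i + 2 ≤ 2 * n ∧ w (i - 1) < w i ∧ w i = w (i + 1) ∧ w (i + 2) < w i

theorem mesaSet_eq_image (n : ℕ) (w : ℕ → ℕ) : MesaSet n w = w '' {i | IsMesaPos n w i} := by
  ext m
  simp only [MesaSet, IsMesaPos, Set.mem_image, Set.mem_ofPred_eq, and_assoc]

theorem IsMesaPos.add_three_le {n : ℕ} {w : ℕ → ℕ} {i j : ℕ} (hi : IsMesaPos n w i)
    (hj : IsMesaPos n w j) (hij : i < j) : i + 3 ≤ j := by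
  obtain ⟨-, -, -, hi1, hi2⟩ := hi
  obtain ⟨-, -, hj0, -, -⟩ := hj
  by_contra hlt
  obtain rfl | rfl : j = i + 1 ∨ j = i + 2 := by omega
  all_goals simp only [Nat.add_sub_cancel, Nat.add_succ_sub_one] at hj0; omega

theorem card_insert_pred_min'_biUnion_Icc (P : Finset ℕ) (hP : P.Nonempty)
    (hpos : ∀ i ∈ P, 1 ≤ i) (hgap : ∀ i ∈ P, ∀ j ∈ P, i < j → i + 3 ≤ j) :
    (insert (P.min' hP - 1) (P.biUnion fun i => Finset.Icc i (i + 2))).card = 3 * P.card + 1 := by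
  have hdisj : (P : Set ℕ).PairwiseDisjoint fun i => Finset.Icc i (i + 2) := by
    intro i hi j hj hij
    rw [Function.onFun, Finset.disjoint_left]
    intro t hti htj
    simp only [Finset.mem_Icc] at hti htj
    rcases lt_or_gt_of_ne hij with h | h
    · have := hgap i hi j hj h; omega
    · have := hgap j hj i hi h; omega
  have hnotin : P.min' hP - 1 ∉ P.biUnion fun i => Finset.Icc i (i + 2) := by
    simp only [Finset.mem_biUnion, Finset.mem_Icc, not_exists, not_and]
    intro i hi hle
    have := P.min'_le i hi
    have := hpos _ (P.min'_mem hP)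
    omega
  rw [Finset.card_insert_of_notMem hnotin, Finset.card_biUnion hdisj,
    Finset.sum_const_nat (m := 3) fun i _ => by simp; omega, mul_comm]

theorem card_filter_le_two_mul {n : ℕ} {w : ℕ → ℕ} (hw : IsStirling n w) (x : ℕ) :
    ((Finset.Icc 1 (2 * n)).filter fun p => w p ≤ x).card ≤ 2 * x := by
  obtain ⟨hcount, hrange, -⟩ := hw
  set s := (Finset.Icc 1 (2 * n)).filter fun p => w p ≤ x
  have hfiber : ∀ a ∈ s.image w, (s.filter fun p => w p = a).card ≤ 2 := by
    intro a ha
    obtain ⟨p, hp, rfl⟩ := Finset.mem_image.1 ha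
    simp only [s, Finset.mem_filter, Finset.mem_Icc] at hp
    have := hrange p hp.1.1 hp.1.2
    rw [← hcount (w p) this.1 this.2]
    exact Finset.card_le_card (Finset.filter_subset_filter _ (Finset.filter_subset _ _))
  have himage : s.image w ⊆ Finset.Icc 1 x := by
    intro a ha
    obtain ⟨p, hp, rfl⟩ := Finset.mem_image.1 ha
    simp only [s, Finset.mem_filter, Finset.mem_Icc] at hp ⊢
    exact ⟨(hrange p hp.1.1 hp.1.2).1, hp.2⟩
  calc s.card ≤ 2 * (s.image w).card := Finset.card_le_mul_card_image s 2 hfiber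
    _ ≤ 2 * x := by
      have := Finset.card_le_card himage
      rw [Nat.card_Icc] at this
      omega

theorem three_mul_ncard_mesaSet_inter_le {n : ℕ} {w : ℕ → ℕ} (hw : IsStirling n w) (x : ℕ) :
    3 * (MesaSet n w ∩ Set.Icc 1 x).ncard ≤ 2 * x - 1 := by
  classical
  set P := (Finset.Icc 1 (2 * n)).filter fun i => IsMesaPos n w i ∧ w i ≤ x
  have hmesaP : ∀ i ∈ P, IsMesaPos n w i ∧ w i ≤ x := fun i hi => (Finset.mem_filter.1 hi).2
  have hsub : MesaSet n w ∩ Set.Icc 1 x ⊆ ↑(P.image w) := by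
    rintro m ⟨hm, -, hmx⟩
    rw [mesaSet_eq_image] at hm
    obtain ⟨i, hi, rfl⟩ := hm
    simp only [Finset.coe_image, Set.mem_image, Finset.mem_coe]
    refine ⟨i, Finset.mem_filter.2 ⟨Finset.mem_Icc.2 ?_, hi, hmx⟩, rfl⟩
    obtain ⟨h2, hn, -⟩ := hi
    omega
  have hcard : (MesaSet n w ∩ Set.Icc 1 x).ncard ≤ P.card :=
    (Set.ncard_le_ncard hsub (Finset.finite_toSet _)).trans
      ((Set.ncard_coe_finset _).trans_le Finset.card_image_le)
  rcases P.eq_empty_or_nonempty with hP | hP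
  · rw [hP, Finset.card_empty] at hcard
    omega
  have hsubT : insert (P.min' hP - 1) (P.biUnion fun i => Finset.Icc i (i + 2)) ⊆
      (Finset.Icc 1 (2 * n)).filter fun p => w p ≤ x := by
    intro t ht
    simp only [Finset.mem_insert, Finset.mem_biUnion, Finset.mem_Icc, Finset.mem_filter] at ht ⊢
    rcases ht with rfl | ⟨i, hi, hit⟩
    · obtain ⟨⟨h2, hn, hlt, -⟩, hx⟩ := hmesaP _ (P.min'_mem hP)
      exact ⟨⟨by omega, by omega⟩, by omega⟩
    · obtain ⟨⟨h2, hn, -, heq, hlt⟩, hx⟩ := hmesaP i hi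
      obtain rfl | rfl | rfl : t = i ∨ t = i + 1 ∨ t = i + 2 := by omega
      all_goals exact ⟨⟨by omega, by omega⟩, by omega⟩
  have := (Finset.card_le_card hsubT).trans (card_filter_le_two_mul hw x)
  rw [card_insert_pred_min'_biUnion_Icc P hP (fun i hi => by have := (hmesaP i hi).1.1; omega)
    fun i hi j hj => (hmesaP i hi).1.add_three_le (hmesaP j hj).1] at this
  omega

def mesas : List ℕ → List ℕ
  | a :: l@(b :: c :: d :: _) => if a < b ∧ b = c ∧ d < b then b :: mesas l else mesas l
  | _ => []

theorem mem_mesas_iff : ∀ {L : List ℕ} {m : ℕ}, m ∈ mesas L ↔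
    ∃ j, j + 3 < L.length ∧ L.getD j 0 < L.getD (j + 1) 0 ∧
      L.getD (j + 1) 0 = L.getD (j + 2) 0 ∧ L.getD (j + 3) 0 < L.getD (j + 1) 0 ∧
      L.getD (j + 1) 0 = m
  | a :: b :: c :: d :: l, m => by
    have ih := mem_mesas_iff (L := b :: c :: d :: l) (m := m)
    rw [← Nat.or_exists_add_one]
    simp only [mesas, List.getD_cons_succ, List.getD_cons_zero, List.length_cons] at ih ⊢
    split_ifs with h <;> simp only [List.mem_cons, ih] <;> grind
  | [], _ | [_], _ | [_, _], _ | [_, _, _], _ => by simp [mesas]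

theorem mesaSet_getD {n : ℕ} {L : List ℕ} (hlen : L.length = 2 * n) :
    MesaSet n (fun i => L.getD (i - 1) 0) = {m | m ∈ mesas L} := by
  ext m
  simp only [MesaSet, Set.mem_ofPred_eq, mem_mesas_iff]
  constructor
  · rintro ⟨i, hi2, hin, h⟩
    obtain ⟨j, rfl⟩ : ∃ j, i = j + 2 := ⟨i - 2, by omega⟩
    exact ⟨j, by omega, h⟩
  · rintro ⟨j, hj, h⟩
    exact ⟨j + 2, by omega, by omega, h⟩

theorem mesas_cons_of_le_left {a b : ℕ} (l : List ℕ) (h : b ≤ a) :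
    mesas (a :: b :: l) = mesas (b :: l) := by
  match l with
  | c :: d :: l => simp only [mesas]; rw [if_neg (by omega)]
  | [] | [_] => simp [mesas]

theorem mesas_cons_of_le_right {a b c d : ℕ} (l : List ℕ) (h : b ≤ d) :
    mesas (a :: b :: c :: d :: l) = mesas (b :: c :: d :: l) := by
  simp only [mesas]; rw [if_neg (by omega)]

theorem mesas_cons_of_peak {a b d : ℕ} (l : List ℕ) (hab : a < b) (hdb : d < b) :
    mesas (a :: b :: b :: d :: l) = b :: mesas (b :: b :: d :: l) := by
  simp [mesas, hab, hdb]

def Nested (L : List ℕ) : Prop :=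
  ∀ i j k, i < j → j < k → k < L.length → L.getD i 0 = L.getD k 0 → L.getD i 0 < L.getD j 0

theorem Nested.append {A B : List ℕ} (hA : Nested A) (hB : Nested B)
    (hAB : ∀ x ∈ A, x ∉ B) : Nested (A ++ B) := by
  intro i j k hij hjk hk heq
  rw [List.length_append] at hk
  by_cases hkA : k < A.length
  · rw [List.getD_append _ _ _ _ (by omega), List.getD_append _ _ _ _ hkA] at heq
    rw [List.getD_append _ _ _ _ (by omega), List.getD_append _ _ _ _ (by omega)]
    exact hA i j k hij hjk hkA heq
  by_cases hiA : i < A.length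
  · rw [List.getD_append _ _ _ _ hiA, List.getD_append_right _ _ _ _ (by omega),
      List.getD_eq_getElem _ _ hiA, List.getD_eq_getElem _ _ (by omega)] at heq
    exact absurd (heq ▸ List.getElem_mem _) (hAB _ (List.getElem_mem hiA))
  rw [List.getD_append_right _ _ _ _ (by omega), List.getD_append_right _ _ _ _ (by omega)] at heq ⊢
  exact hB (i - A.length) (j - A.length) (k - A.length) (by omega) (by omega) (by omega) heq

theorem nested_pair (a : ℕ) : Nested [a, a] := by
  intro i j k _ _ hk
  simp at hk
  omega

theorem nested_quadruple {g m : ℕ} (h : g < m) : Nested [g, m, m, g] := by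
  intro i j k hij hjk hk heq
  simp only [List.length_cons, List.length_nil] at hk
  interval_cases k <;> interval_cases j <;> interval_cases i <;> simp_all

theorem card_filter_range_getD_eq_count (L : List ℕ) (v : ℕ) :
    ((Finset.range L.length).filter (fun i => L.getD i 0 = v)).card = L.count v := by
  induction L with
  | nil => simp
  | cons a L ih =>
    rw [Finset.card_filter, List.length_cons, Finset.sum_range_succ']
    simp only [List.getD_cons_succ, List.getD_cons_zero]
    rw [← Finset.card_filter, ih, List.count_cons]
    simp

theorem card_filter_Icc_getD_eq_count (L : List ℕ) (v : ℕ) :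
    ((Finset.Icc 1 L.length).filter (fun i => L.getD (i - 1) 0 = v)).card = L.count v := by
  rw [← card_filter_range_getD_eq_count]
  apply Finset.card_nbij' (· - 1) (· + 1) <;> intro i hi <;> simp at hi ⊢ <;> omega

theorem isStirling_getD {n : ℕ} {L : List ℕ} (hlen : L.length = 2 * n)
    (hcount : ∀ v, 1 ≤ v → v ≤ n → L.count v = 2) (hmem : ∀ v ∈ L, 1 ≤ v ∧ v ≤ n)
    (hL : Nested L) : IsStirling n (fun i => L.getD (i - 1) 0) := by
  refine ⟨fun v h1 h2 => ?_, fun i h1 h2 => ?_, fun i j l h1 hij hjl hl heq => ?_⟩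
  · rw [← hlen, card_filter_Icc_getD_eq_count, hcount v h1 h2]
  · show 1 ≤ L.getD (i - 1) 0 ∧ L.getD (i - 1) 0 ≤ n
    rw [List.getD_eq_getElem _ _ (by omega)]
    exact hmem _ (List.getElem_mem _)
  · exact hL (i - 1) (j - 1) (l - 1) (by omega) (by omega) (by omega) heq

def doubled {α : Type*} : List α → List α
  | [] => []
  | a :: l => a :: a :: doubled l

theorem length_doubled {α : Type*} (l : List α) : (doubled l).length = 2 * l.length := by
  induction l with
  | nil => rfl
  | cons a l ih => simp only [doubled, List.length_cons, ih]; omega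

@[simp]
theorem mem_doubled {α : Type*} {a : α} {l : List α} : a ∈ doubled l ↔ a ∈ l := by
  induction l with
  | nil => simp [doubled]
  | cons b l ih => simp [doubled, ih]

theorem count_doubled {α : Type*} [BEq α] (l : List α) (a : α) :
    (doubled l).count a = 2 * l.count a := by
  induction l with
  | nil => rfl
  | cons b l ih => simp only [doubled, List.count_cons, ih]; omega

theorem mesas_cons_doubled :
    ∀ (p : ℕ) {l : List ℕ}, l.Pairwise (· < ·) → mesas (p :: doubled l) = []
  | _, [], _ | _, [_], _ => by simp [doubled, mesas]
  | p, a :: b :: l, h => by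
    have hab : a < b := List.rel_of_pairwise_cons h List.mem_cons_self
    rw [doubled, doubled, mesas_cons_of_le_right _ hab.le, mesas_cons_of_le_left _ le_rfl,
      ← doubled]
    exact mesas_cons_doubled a h.of_cons

theorem mesas_doubled {l : List ℕ} (h : l.Pairwise (· < ·)) : mesas (doubled l) = [] := by
  match l with
  | [] => simp [doubled, mesas]
  | a :: l => rw [doubled, mesas_cons_of_le_left _ le_rfl]; exact mesas_cons_doubled a h.of_cons

theorem nested_doubled : ∀ {l : List ℕ}, l.Nodup → Nested (doubled l)
  | [], _ => by intro i j k _ _ hk; simp [doubled] at hk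
  | a :: l, h => by
    rw [List.nodup_cons] at h
    refine (nested_pair a).append (nested_doubled h.2) ?_
    simpa using h.1

def stirlingWord : List ℕ → List ℕ → List ℕ
  | m :: m' :: ms, g :: gs => g :: m :: m :: g :: m' :: m' :: stirlingWord ms gs
  | [m], g :: gs => g :: m :: m :: g :: doubled gs
  | [], gs => doubled gs
  | ms@(_ :: _), [] => doubled ms

theorem count_stirlingWord : ∀ (ms gs : List ℕ) (v : ℕ),
    (stirlingWord ms gs).count v = 2 * (ms ++ gs).count v
  | m :: m' :: ms, g :: gs, v => by
    simp only [stirlingWord, List.count_cons, count_stirlingWord ms gs v, List.cons_append,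
      List.count_append]
    omega
  | [m], g :: gs, v => by
    simp only [stirlingWord, List.count_cons, count_doubled, List.cons_append, List.nil_append]
    omega
  | [], gs, v => count_doubled gs v
  | _ :: _, [], v => by rw [stirlingWord, count_doubled, List.append_nil]

theorem stirlingWord_perm (ms gs : List ℕ) :
    (stirlingWord ms gs).Perm (doubled (ms ++ gs)) :=
  List.perm_iff_count.2 fun v => by rw [count_stirlingWord, count_doubled]

theorem mem_stirlingWord {ms gs : List ℕ} {a : ℕ} : a ∈ stirlingWord ms gs ↔ a ∈ ms ++ gs :=
  (stirlingWord_perm ms gs).mem_iff.trans mem_doubled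

/-- For sorted `gs` this says `gs[(i + 1) / 2] < ms[i]`: in `stirlingWord ms gs` the letters of
`gs` adjacent to the block `ms[i] ms[i]` are smaller than `ms[i]`. -/
def Interleaved (ms gs : List ℕ) : Prop :=
  ∀ i (hi : i < ms.length), (i + 1) / 2 < gs.countP (· < ms[i])

theorem head_lt_of_countP_pos {g x : ℕ} {gs : List ℕ} (hgs : (g :: gs).Pairwise (· < ·))
    (h : 0 < (g :: gs).countP (· < x)) : g < x := by
  obtain ⟨y, hy, hyx⟩ := List.countP_pos_iff.1 h
  rcases List.mem_cons.1 hy with rfl | hy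
  · simpa using hyx
  · exact (List.rel_of_pairwise_cons hgs hy).trans (by simpa using hyx)

namespace Interleaved

variable {m m' g : ℕ} {ms gs : List ℕ}

theorem head_lt (h : Interleaved (m :: ms) (g :: gs)) (hgs : (g :: gs).Pairwise (· < ·)) :
    g < m :=
  head_lt_of_countP_pos hgs (h 0 (by simp))

theorem exists_cons (h : Interleaved (m :: m' :: ms) (g :: gs))
    (hgs : (g :: gs).Pairwise (· < ·)) : ∃ g' gs', gs = g' :: gs' ∧ g' < m' := by
  have h1 := h 1 (by simp)
  simp only [List.countP_cons, List.getElem_cons_succ, List.getElem_cons_zero] at h1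
  match gs, hgs with
  | [], _ => simp at h1; split_ifs at h1 <;> omega
  | g' :: gs', hgs =>
    exact ⟨g', gs', rfl, head_lt_of_countP_pos hgs.of_cons (by split_ifs at h1 <;> omega)⟩

theorem tail (h : Interleaved (m :: m' :: ms) (g :: gs)) : Interleaved ms gs := by
  intro i hi
  have h2 := h (i + 2) (by simpa using hi)
  simp only [List.countP_cons, List.getElem_cons_succ] at h2
  split_ifs at h2 <;> omega

end Interleaved

theorem mesas_stirlingWord : ∀ {ms gs : List ℕ}, gs.Pairwise (· < ·) → Interleaved ms gs →
    mesas (stirlingWord ms gs) = ms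
  | m :: m' :: ms, g :: gs, hgs, hI => by
    obtain ⟨g', gs', rfl, hg'm'⟩ := hI.exists_cons hgs
    have hgm := hI.head_lt hgs
    have hgg' : g < g' := List.rel_of_pairwise_cons hgs List.mem_cons_self
    obtain ⟨W, hW⟩ : ∃ W, stirlingWord ms (g' :: gs') = g' :: W := by
      match ms with
      | [] | [_] | _ :: _ :: _ => exact ⟨_, rfl⟩
    rw [stirlingWord, mesas_cons_of_peak _ hgm hgm, mesas_cons_of_le_left _ le_rfl,
      mesas_cons_of_le_left _ hgm.le, hW, mesas_cons_of_peak _ (hgg'.trans hg'm') hg'm',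
      mesas_cons_of_le_left _ le_rfl, mesas_cons_of_le_left _ hg'm'.le, ← hW,
      mesas_stirlingWord hgs.of_cons hI.tail]
  | [m], g :: gs, hgs, hI => by
    have hgm := hI.head_lt hgs
    rw [stirlingWord, mesas_cons_of_peak _ hgm hgm, mesas_cons_of_le_left _ le_rfl,
      mesas_cons_of_le_left _ hgm.le, mesas_cons_doubled g hgs.of_cons]
  | [], _, hgs, _ => mesas_doubled hgs
  | _ :: _, [], _, hI => absurd (hI 0 (by simp)) (by simp)

theorem nested_stirlingWord : ∀ {ms gs : List ℕ}, (ms ++ gs).Nodup → gs.Pairwise (· < ·) →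
    Interleaved ms gs → Nested (stirlingWord ms gs)
  | m :: m' :: ms, g :: gs, hnd, hgs, hI => by
    have hsub : (ms ++ gs).Sublist (m :: m' :: ms ++ g :: gs) :=
      ((List.sublist_cons_self _ _).trans (List.sublist_cons_self _ _)).append
        (List.sublist_cons_self _ _)
    refine (nested_quadruple (hI.head_lt hgs)).append ((nested_pair m').append
      (nested_stirlingWord (hnd.sublist hsub) hgs.of_cons hI.tail) ?_) ?_ <;>
    simp only [List.nodup_cons, List.nodup_append, List.mem_cons] at hnd <;>
    simp only [List.mem_append, mem_stirlingWord, List.mem_cons, List.not_mem_nil] <;> grind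
  | [m], g :: gs, hnd, hgs, hI => by
    simp only [List.cons_append, List.nil_append, List.nodup_cons, List.mem_cons, not_or] at hnd
    exact (nested_quadruple (hI.head_lt hgs)).append (nested_doubled hnd.2.2) (by simp; grind)
  | [], _, hnd, _, _ => nested_doubled hnd
  | _ :: _, [], hnd, _, _ => by rw [stirlingWord]; exact nested_doubled (by simpa using hnd)

theorem exists_isStirling_mesaSet_eq {n : ℕ} {ms gs : List ℕ} (hgs : gs.Pairwise (· < ·))
    (hnd : (ms ++ gs).Nodup) (hmem : ∀ v, v ∈ ms ++ gs ↔ 1 ≤ v ∧ v ≤ n)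
    (hI : Interleaved ms gs) : ∃ w, IsStirling n w ∧ MesaSet n w = {m | m ∈ ms} := by
  have hlen : (stirlingWord ms gs).length = 2 * n := by
    have hIcc : (ms ++ gs).toFinset = Finset.Icc 1 n := by
      ext v
      rw [List.mem_toFinset, hmem, Finset.mem_Icc]
    rw [(stirlingWord_perm ms gs).length_eq, length_doubled, ← List.toFinset_card_of_nodup hnd,
      hIcc, Nat.card_Icc, Nat.add_sub_cancel]
  refine ⟨_, isStirling_getD hlen (fun v h1 h2 => ?_) (fun v hv => ?_)
    (nested_stirlingWord hnd hgs hI), by rw [mesaSet_getD hlen, mesas_stirlingWord hgs hI]⟩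
  · rw [count_stirlingWord, List.count_eq_one_of_mem hnd ((hmem v).2 ⟨h1, h2⟩)]
  · exact (hmem v).1 (mem_stirlingWord.1 hv)

theorem countP_eq_of_getElem_iff {α : Type*} (l : List α) (p : α → Bool) {k : ℕ}
    (hk : k ≤ l.length) (h : ∀ j (hj : j < l.length), p l[j] ↔ j < k) : l.countP p = k := by
  rw [← List.take_append_drop k l, List.countP_append, List.countP_eq_length.2,
    List.countP_eq_zero.2, List.length_take, min_eq_left hk, add_zero]
  · intro a ha
    obtain ⟨j, hj, rfl⟩ := List.mem_drop_iff_getElem.1 ha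
    simpa using (h (k + j) (by omega)).not.2 (by omega)
  · intro a ha
    obtain ⟨j, hj, rfl⟩ := List.mem_take_iff_getElem.1 ha
    exact (h j (by omega)).2 (by omega)

theorem interleaved_of_density {n : ℕ} {ms gs : List ℕ} (hms : ms.SortedLT)
    (hnd : (ms ++ gs).Nodup) (hmem : ∀ v, v ∈ ms ++ gs ↔ 1 ≤ v ∧ v ≤ n)
    (hdens : ∀ x ∈ ms, 3 * ms.countP (· ≤ x) ≤ 2 * x - 1) : Interleaved ms gs := by
  intro i hi
  have hlt : ms.countP (· < ms[i]) = i :=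
    countP_eq_of_getElem_iff _ _ hi.le fun j hj => by simp [hms.getElem_lt_getElem_iff]
  have hle : ms.countP (· ≤ ms[i]) = i + 1 :=
    countP_eq_of_getElem_iff _ _ hi fun j hj => by simp [hms.getElem_le_getElem_iff]
  have hx := (hmem ms[i]).1 (List.mem_append_left _ (List.getElem_mem hi))
  have hbelow : (ms ++ gs).countP (· < ms[i]) = ms[i] - 1 := by
    have hIco : ((ms ++ gs).filter (· < ms[i])).toFinset = Finset.Ico 1 ms[i] := by
      ext v
      simp only [List.mem_toFinset, List.mem_filter, hmem, decide_eq_true_eq, Finset.mem_Ico]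
      omega
    rw [List.countP_eq_length_filter, ← List.toFinset_card_of_nodup (hnd.filter _), hIco,
      Nat.card_Ico]
  have hdens_i := hdens _ (List.getElem_mem hi)
  rw [List.countP_append] at hbelow
  omega

theorem ncard_inter_Icc_eq_countP {M : Set ℕ} {ms : List ℕ} (hnd : ms.Nodup)
    (hmem : ∀ v, v ∈ ms ↔ v ∈ M) (hpos : ∀ x ∈ M, 1 ≤ x) (x : ℕ) :
    (M ∩ Set.Icc 1 x).ncard = ms.countP (· ≤ x) := by
  have hset : M ∩ Set.Icc 1 x = ↑(ms.filter (· ≤ x)).toFinset := by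
    ext v
    simp only [Set.mem_inter_iff, Set.mem_Icc, Finset.mem_coe, List.mem_toFinset,
      List.mem_filter, hmem, decide_eq_true_eq]
    constructor
    · rintro ⟨hv, -, hvx⟩
      exact ⟨hv, hvx⟩
    · rintro ⟨hv, hvx⟩
      exact ⟨hv, hpos v hv, hvx⟩
  rw [hset, Set.ncard_coe_finset, List.toFinset_card_of_nodup (hnd.filter _),
    List.countP_eq_length_filter]

theorem exists_sorted_lists {M : Set ℕ} (hfin : M.Finite) {n : ℕ} (hM : M ⊆ Set.Icc 1 n) :
    ∃ ms gs : List ℕ, ms.SortedLT ∧ gs.SortedLT ∧ (ms ++ gs).Nodup ∧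
      (∀ v, v ∈ ms ++ gs ↔ 1 ≤ v ∧ v ≤ n) ∧ ∀ v, v ∈ ms ↔ v ∈ M := by
  classical
  refine ⟨hfin.toFinset.sort, (Finset.Icc 1 n \ hfin.toFinset).sort, Finset.sortedLT_sort _,
    Finset.sortedLT_sort _, ?_, fun v => ?_, by simp⟩
  · rw [List.nodup_append]
    refine ⟨Finset.sort_nodup _ _, Finset.sort_nodup _ _, ?_⟩
    simp only [Finset.mem_sort, Set.Finite.mem_toFinset, Finset.mem_sdiff]
    exact fun a ha b hb hab => hb.2 (hab ▸ ha)
  · have := @hM v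
    simp only [List.mem_append, Finset.mem_sort, Set.Finite.mem_toFinset, Finset.mem_sdiff,
      Finset.mem_Icc, Set.mem_Icc] at this ⊢
    tauto

end StirlingPermutation

open StirlingPermutation

theorem mesa_characterization (M : Set ℕ) (hfin : M.Finite) (hpos : ∀ x ∈ M, 1 ≤ x) :
    (∃ n w, IsStirling n w ∧ MesaSet n w = M) ↔
      ∀ x ∈ M, 3 * (M ∩ Set.Icc 1 x).ncard ≤ 2*x - 1 := by
  constructor
  · rintro ⟨n, w, hw, rfl⟩ x -
    exact three_mul_ncard_mesaSet_inter_le hw x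
  · intro hdens
    obtain ⟨n, hn⟩ := hfin.bddAbove
    obtain ⟨ms, gs, hms, hgs, hnd, hmem, hmsM⟩ :=
      exists_sorted_lists hfin fun x hx => ⟨hpos x hx, hn hx⟩
    have hI : Interleaved ms gs := interleaved_of_density hms hnd hmem fun x hx => by
      rw [← ncard_inter_Icc_eq_countP hms.nodup hmsM hpos]
      exact hdens x ((hmsM x).1 hx)
    obtain ⟨w, hw, hmesa⟩ := exists_isStirling_mesaSet_eq hgs.pairwise hnd hmem hI
    exact ⟨n, w, hw, hmesa.trans (Set.ext hmsM)⟩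
end

section
/- If M is an admissible mesa set for some Stirling permutation, then writing M = {m_1 < m_2 < ⋯ < m_l}, one has m_i > ⌊3i/2⌋ for all 1 ≤ i ≤ l. -/
theorem minimal_mesa_values (M : Finset ℕ)
    (hM : ∃ n w, IsStirling n w ∧ MesaSet n w = ↑M) :
    ∀ i : Fin M.card, 3 * (i.val + 1) / 2 < ((M.orderIsoOfFin rfl) i : ℕ) := by
  obtain ⟨n, w, ⟨hcard2, hrange, _⟩, hMes⟩ := hM
  intro i
  set m : ℕ := ((M.orderIsoOfFin rfl) i : ℕ) with hm
  have hmM : m ∈ M := ((M.orderIsoOfFin rfl) i).2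
  classical
  -- choose witnesses
  have hex : ∀ t ∈ M, ∃ q, 2 ≤ q ∧ q + 2 ≤ 2*n ∧ w (q-1) < w q ∧ w q = w (q+1) ∧
      w (q+2) < w q ∧ w q = t := by
    intro t ht
    have : t ∈ MesaSet n w := by rw [hMes]; exact_mod_cast ht
    exact this
  choose! p hp using hex
  -- positions of value t are exactly p t, p t + 1
  have htwo : ∀ t ∈ M, ∀ q, 1 ≤ q → q ≤ 2*n → w q = t → q = p t ∨ q = p t + 1 := by
    intro t ht q hq1 hq2 hwq
    obtain ⟨h1, h2, _, h4, _, h6⟩ := hp t ht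
    have hval : 1 ≤ t ∧ t ≤ n := by
      have := hrange (p t) (by omega) (by omega)
      omega
    have hpair : ({p t, p t + 1} : Finset ℕ) ⊆ (Finset.Icc 1 (2*n)).filter (fun i => w i = t) := by
      intro x hx
      simp only [Finset.mem_insert, Finset.mem_singleton] at hx
      rcases hx with rfl | rfl <;> simp [Finset.mem_filter, Finset.mem_Icc] <;> omega
    have hc : ((Finset.Icc 1 (2*n)).filter (fun i => w i = t)).card ≤
        ({p t, p t + 1} : Finset ℕ).card := by
      rw [hcard2 t hval.1 hval.2, Finset.card_insert_of_notMem (by simp), Finset.card_singleton]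
    have heq := Finset.eq_of_subset_of_card_le hpair hc
    have : q ∈ ({p t, p t + 1} : Finset ℕ) := by
      rw [heq]; simp [Finset.mem_filter, Finset.mem_Icc]; omega
    simpa using this
  -- neighbors of a plateau are not mesas
  have hnbr : ∀ t ∈ M, w (p t - 1) ∉ M ∧ w (p t + 2) ∉ M := by
    intro t ht
    obtain ⟨h1, h2, h3, h4, h5, h6⟩ := hp t ht
    constructor
    · intro hsM
      obtain ⟨g1, g2, g3, g4, g5, g6⟩ := hp (w (p t - 1)) hsM
      have := htwo (w (p t - 1)) hsM (p t - 1) (by omega) (by omega) rfl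
      rcases this with h | h
      · have e1 : w (p (w (p t - 1))) = w (p t - 1) := by rw [← h]
        have e2 : w (p (w (p t - 1)) + 1) = w (p t) := by congr 1; omega
        omega
      · have e2 : w (p (w (p t - 1)) + 2) = w (p t) := by congr 1; omega
        omega
    · intro hsM
      obtain ⟨g1, g2, g3, g4, g5, g6⟩ := hp (w (p t + 2)) hsM
      have := htwo (w (p t + 2)) hsM (p t + 2) (by omega) (by omega) rfl
      rcases this with h | h
      · have e1 : w (p (w (p t + 2))) = w (p t + 2) := by rw [← h]
        have e2 : w (p (w (p t + 2)) - 1) = w (p t + 1) := by congr 1; omega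
        omega
      · have e1 : w (p (w (p t + 2)) + 1) = w (p t + 2) := by congr 1; omega
        have e2 : w (p (w (p t + 2))) = w (p t + 1) := by congr 1; omega
        omega
  -- the set of mesas ≤ m
  set T : Finset ℕ := M.filter (fun t => t ≤ m) with hT
  have hTM : ∀ t ∈ T, t ∈ M ∧ t ≤ m := by
    intro t ht; rw [hT, Finset.mem_filter] at ht; exact ht
  have hTk : i.val + 1 ≤ T.card := by
    have hinj : ∀ j : Fin (i.val + 1),
        (((M.orderIsoOfFin rfl) ⟨j.val, by omega⟩ : ℕ)) ∈ T := by
      intro j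
      rw [hT, Finset.mem_filter]
      refine ⟨((M.orderIsoOfFin rfl) ⟨j.val, by omega⟩).2, ?_⟩
      have : (⟨j.val, by omega⟩ : Fin M.card) ≤ i := by
        simp [Fin.le_def]; omega
      exact_mod_cast (M.orderIsoOfFin rfl).monotone this
    calc i.val + 1 = (Finset.univ : Finset (Fin (i.val + 1))).card := by simp
      _ ≤ T.card := by
          apply Finset.card_le_card_of_injOn
            (fun j => ((M.orderIsoOfFin rfl) ⟨j.val, by omega⟩ : ℕ))
          · intro j _; exact hinj j
          · intro a _ b _ hab
            have h2 := (M.orderIsoOfFin rfl).injective (Subtype.coe_injective hab)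
            have h3 : a.val = b.val := by simpa using h2
            exact Fin.ext h3
  have hTne : T.Nonempty := Finset.card_pos.mp (by omega)
  obtain ⟨t0, ht0T, ht0min⟩ := T.exists_min_image p hTne
  -- the neighbor positions
  set P : Finset ℕ := insert (p t0 - 1) (T.image (fun t => p t + 2)) with hPdef
  have hpinjT : ∀ t ∈ T, ∀ t' ∈ T, p t = p t' → t = t' := by
    intro t ht t' ht' h
    have h6 := (hp t (hTM t ht).1).2.2.2.2.2
    have h6' := (hp t' (hTM t' ht').1).2.2.2.2.2
    rw [← h6, ← h6', h]
  have hPcard : P.card = T.card + 1 := by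
    rw [hPdef, Finset.card_insert_of_notMem, Finset.card_image_of_injOn]
    · intro t ht t' ht' h
      simp only at h
      exact hpinjT t ht t' ht' (by omega)
    · intro hmem
      obtain ⟨t, htT, hteq⟩ := Finset.mem_image.mp hmem
      have h1 := (hp t (hTM t htT).1).1
      have h2 := (hp t0 (hTM t0 ht0T).1).1
      have := ht0min t htT
      omega
  have hPprop : ∀ q ∈ P, 1 ≤ q ∧ q ≤ 2*n ∧ 1 ≤ w q ∧ w q ≤ m ∧ w q ∉ M := by
    intro q hq
    rw [hPdef, Finset.mem_insert] at hq
    rcases hq with rfl | hq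
    · obtain ⟨h1, h2, h3, h4, h5, h6⟩ := hp t0 (hTM t0 ht0T).1
      have hb : 1 ≤ p t0 - 1 ∧ p t0 - 1 ≤ 2*n := by omega
      have hr := hrange (p t0 - 1) hb.1 hb.2
      refine ⟨hb.1, hb.2, hr.1, ?_, (hnbr t0 (hTM t0 ht0T).1).1⟩
      have := (hTM t0 ht0T).2
      omega
    · obtain ⟨t, htT, rfl⟩ := Finset.mem_image.mp hq
      obtain ⟨h1, h2, h3, h4, h5, h6⟩ := hp t (hTM t htT).1
      have hb : 1 ≤ p t + 2 ∧ p t + 2 ≤ 2*n := by omega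
      have hr := hrange (p t + 2) hb.1 hb.2
      refine ⟨hb.1, hb.2, hr.1, ?_, (hnbr t (hTM t htT).1).2⟩
      have := (hTM t htT).2
      omega
  set N : Finset ℕ := P.image w with hN
  have hPN : P.card ≤ 2 * N.card := by
    apply Finset.card_le_mul_card_image
    intro v hv
    obtain ⟨q, hqP, rfl⟩ := Finset.mem_image.mp hv
    have hq := hPprop q hqP
    have hvn : 1 ≤ w q ∧ w q ≤ n := hrange q hq.1 hq.2.1
    calc (P.filter (fun x => w x = w q)).card
        ≤ ((Finset.Icc 1 (2*n)).filter (fun x => w x = w q)).card := by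
          apply Finset.card_le_card
          intro x hx
          rw [Finset.mem_filter] at hx ⊢
          have := hPprop x hx.1
          exact ⟨Finset.mem_Icc.mpr ⟨this.1, this.2.1⟩, hx.2⟩
      _ = 2 := hcard2 (w q) hvn.1 hvn.2
  have hTN : Disjoint T N := by
    rw [Finset.disjoint_right]
    intro v hvN hvT
    obtain ⟨q, hqP, rfl⟩ := Finset.mem_image.mp hvN
    exact (hPprop q hqP).2.2.2.2 (hTM _ hvT).1
  have hsub : T ∪ N ⊆ Finset.Icc 1 m := by
    intro x hx
    rw [Finset.mem_union] at hx
    rcases hx with hx | hx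
    · obtain ⟨hxM, hxm⟩ := hTM x hx
      obtain ⟨h1, h2, _, _, _, h6⟩ := hp x hxM
      have := hrange (p x) (by omega) (by omega)
      rw [Finset.mem_Icc]
      omega
    · obtain ⟨q, hqP, rfl⟩ := Finset.mem_image.mp hx
      have := hPprop q hqP
      rw [Finset.mem_Icc]
      exact ⟨this.2.2.1, this.2.2.2.1⟩
  have hfinal : T.card + N.card ≤ m := by
    have := Finset.card_le_card hsub
    rw [Finset.card_union_of_disjoint hTN] at this
    simpa using this
  omega
end

section
/- For every n ≥ 1, every admissible mesa set of a Stirling permutation of order n is also an admissible mesa set of a Stirling permutation of order n+1; that is, AMS_n ⊆ AMS_{n+1}. -/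
theorem AMS_subset_succ (n : ℕ) (hn : 1 ≤ n) : AMS n ⊆ AMS (n+1) := by
  rintro M ⟨w, ⟨hw1, hw2, hw3⟩, hM⟩
  set w' : ℕ → ℕ := fun i => if i ≤ 2 then n+1 else w (i-2) with hw'
  have hle : ∀ i, i ≤ 2 → w' i = n + 1 := by
    intro i hi; simp [hw', hi]
  have hgt : ∀ i, 3 ≤ i → w' i = w (i - 2) := by
    intro i hi; simp only [hw']; rw [if_neg (by omega)]
  refine ⟨w', ⟨?_, ?_, ?_⟩, ?_⟩
  · -- counts
    intro k hk1 hk2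
    rcases eq_or_lt_of_le hk2 with hk | hk
    · -- k = n+1
      have : (Finset.Icc 1 (2*(n+1))).filter (fun i => w' i = k) = {1, 2} := by
        ext i
        simp only [Finset.mem_filter, Finset.mem_Icc, Finset.mem_insert, Finset.mem_singleton]
        constructor
        · rintro ⟨⟨h1, h2⟩, h3⟩
          by_contra hc
          push_neg at hc
          have hi3 : 3 ≤ i := by omega
          rw [hgt i hi3] at h3
          have := hw2 (i-2) (by omega) (by omega)
          omega
        · rintro (rfl | rfl)
          · exact ⟨⟨by omega, by omega⟩, by rw [hle 1 (by omega)]; omega⟩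
          · exact ⟨⟨by omega, by omega⟩, by rw [hle 2 (by omega)]; omega⟩
      rw [this]
      decide
    · -- k ≤ n
      have hkn : k ≤ n := by omega
      have : (Finset.Icc 1 (2*(n+1))).filter (fun i => w' i = k)
          = ((Finset.Icc 1 (2*n)).filter (fun i => w i = k)).image (· + 2) := by
        ext j
        simp only [Finset.mem_filter, Finset.mem_Icc, Finset.mem_image]
        constructor
        · rintro ⟨⟨h1, h2⟩, h3⟩
          have hj3 : 3 ≤ j := by
            by_contra hc
            rw [hle j (by omega)] at h3
            omega
          refine ⟨j - 2, ⟨⟨by omega, by omega⟩, ?_⟩, by omega⟩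
          rw [hgt j hj3] at h3; exact h3
        · rintro ⟨i, ⟨⟨h1, h2⟩, h3⟩, rfl⟩
          refine ⟨⟨by omega, by omega⟩, ?_⟩
          rw [hgt (i+2) (by omega)]
          simpa using h3
      rw [this, Finset.card_image_of_injective _ (fun a b h => by omega)]
      exact hw1 k hk1 hkn
  · -- bounds
    intro i h1 h2
    by_cases hi : i ≤ 2
    · rw [hle i hi]; omega
    · rw [hgt i (by omega)]
      have := hw2 (i-2) (by omega) (by omega)
      omega
  · -- between condition
    intro i j l h1 h2 h3 h4 h5
    by_cases hi : i ≤ 2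
    · exfalso
      by_cases hl : l ≤ 2
      · omega
      · rw [hle i hi, hgt l (by omega)] at h5
        have := hw2 (l-2) (by omega) (by omega)
        omega
    · have hi3 : 3 ≤ i := by omega
      rw [hgt i hi3, hgt l (by omega)] at h5
      rw [hgt i hi3, hgt j (by omega)]
      exact hw3 (i-2) (j-2) (l-2) (by omega) (by omega) (by omega) (by omega) h5
  · -- mesa sets equal
    rw [← hM]
    ext m
    simp only [MesaSet, Set.mem_setOf_eq]
    constructor
    · rintro ⟨i, hi2, hi2n, ha, hb, hc, hd⟩
      have hi4 : 4 ≤ i := by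
        rcases Nat.lt_or_ge i 4 with h | h
        · exfalso
          interval_cases i
          · rw [hle 1 (by omega), hle 2 (by omega)] at ha; omega
          · rw [hle 2 (by omega), hgt 3 (by omega)] at ha; norm_num at ha
            have := hw2 1 (by omega) (by omega)
            omega
        · exact h
      refine ⟨i - 2, by omega, by omega, ?_, ?_, ?_, ?_⟩
      · rw [hgt (i-1) (by omega), hgt i (by omega)] at ha
        have : i - 1 - 2 = i - 2 - 1 := by omega
        rwa [this] at ha
      · rw [hgt i (by omega), hgt (i+1) (by omega)] at hb
        have : i + 1 - 2 = i - 2 + 1 := by omega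
        rwa [this] at hb
      · rw [hgt i (by omega), hgt (i+2) (by omega)] at hc
        have : i + 2 - 2 = i - 2 + 2 := by omega
        rwa [this] at hc
      · rw [hgt i (by omega)] at hd; exact hd
    · rintro ⟨i, hi2, hi2n, ha, hb, hc, hd⟩
      refine ⟨i + 2, by omega, by omega, ?_, ?_, ?_, ?_⟩
      · rw [hgt (i+2-1) (by omega), hgt (i+2) (by omega)]
        have : i + 2 - 1 - 2 = i - 1 := by omega
        rw [this]; simpa using ha
      · rw [hgt (i+2) (by omega), hgt (i+2+1) (by omega)]
        have : i + 2 + 1 - 2 = i + 1 := by omega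
        rw [this]; simpa using hb
      · rw [hgt (i+2) (by omega), hgt (i+2+2) (by omega)]
        have : i + 2 + 2 - 2 = i + 2 := by omega
        rw [this]; simpa using hc
      · rw [hgt (i+2) (by omega)]; simpa using hd
end

section
/- If M ∈ AMS_{n+1} and n+1 ∈ M, then M \ {n+1} ∈ AMS_n. -/
lemma mem_mesaSet {n : ℕ} {w : ℕ → ℕ} {m : ℕ} :
    m ∈ MesaSet n w ↔ ∃ i, 2 ≤ i ∧ i + 2 ≤ 2*n ∧ w (i-1) < w i ∧ w i = w (i+1) ∧
      w (i+2) < w i ∧ w i = m := Iff.rfl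

open Classical in
noncomputable def wit (n : ℕ) (w : ℕ → ℕ) (m : ℕ) : ℕ :=
  if h : ∃ i, 2 ≤ i ∧ i + 2 ≤ 2*n ∧ w (i-1) < w i ∧ w i = w (i+1) ∧ w (i+2) < w i ∧ w i = m
  then h.choose else 0

lemma wit_spec {n : ℕ} {w : ℕ → ℕ} {m : ℕ} (h : m ∈ MesaSet n w) :
    2 ≤ wit n w m ∧ wit n w m + 2 ≤ 2*n ∧ w (wit n w m - 1) < w (wit n w m) ∧
    w (wit n w m) = w (wit n w m + 1) ∧ w (wit n w m + 2) < w (wit n w m) ∧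
    w (wit n w m) = m := by
  have h' : ∃ i, 2 ≤ i ∧ i + 2 ≤ 2*n ∧ w (i-1) < w i ∧ w i = w (i+1) ∧ w (i+2) < w i ∧
      w i = m := h
  rw [wit, dif_pos h']
  exact h'.choose_spec

lemma wit_sep {n : ℕ} {u : ℕ → ℕ} {m1 m2 : ℕ}
    (h1 : m1 ∈ MesaSet n u) (h2 : m2 ∈ MesaSet n u) (hne : m1 ≠ m2) :
    wit n u m1 + 3 ≤ wit n u m2 ∨ wit n u m2 + 3 ≤ wit n u m1 := by
  obtain ⟨a2, a2n, al, ae, ar, av⟩ := wit_spec h1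
  obtain ⟨b2, b2n, bl, be, br, bv⟩ := wit_spec h2
  set i := wit n u m1 with hi
  set j := wit n u m2 with hj
  by_contra hc
  push_neg at hc
  have hcase : j = i ∨ j = i + 1 ∨ j = i + 2 ∨ i = j + 1 ∨ i = j + 2 := by omega
  rcases hcase with h | h | h | h | h
  · rw [h] at bv; exact hne (av ▸ bv ▸ rfl)
  · rw [h] at bv; rw [← ae] at bv; exact hne (av ▸ bv ▸ rfl)
  · -- j = i + 2 : u (j-1) < u j, i.e. u (i+1) < u (i+2), but u (i+2) < u i = u (i+1)
    rw [h] at bl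
    have e1 : i + 2 - 1 = i + 1 := by omega
    rw [e1] at bl
    rw [← ae] at bl
    omega
  · rw [h] at av; rw [← be] at av; exact hne (av ▸ bv ▸ rfl)
  · rw [h] at al
    have e1 : j + 2 - 1 = j + 1 := by omega
    rw [e1] at al
    rw [← be] at al
    omega

open Classical in
lemma mesa_count {n : ℕ} {u : ℕ → ℕ} (hu : IsStirling n u) (m : ℕ) (hm : m ∈ MesaSet n u) :
    3 * ((Finset.Icc 1 n).filter (fun x => x ∈ MesaSet n u ∧ x ≤ m)).card < 2 * m := by
  obtain ⟨hcard, hbound, _⟩ := hu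
  -- basic facts about mesa values
  have hval : ∀ x ∈ MesaSet n u, 2 ≤ x ∧ x ≤ n := by
    intro x hx
    obtain ⟨i, h2, h2n, hl, he, hr, hv⟩ := hx
    have hb := hbound i (by omega) (by omega)
    have hb' := hbound (i-1) (by omega) (by omega)
    omega
  set T := (Finset.Icc 1 n).filter (fun x => x ∈ MesaSet n u ∧ x ≤ m) with hT
  have hmemT : ∀ x ∈ T, x ∈ MesaSet n u ∧ x ≤ m := by
    intro x hx; exact (Finset.mem_filter.mp hx).2
  have hmT : m ∈ T := by
    refine Finset.mem_filter.mpr ⟨?_, hm, le_refl m⟩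
    have := hval m hm
    exact Finset.mem_Icc.mpr ⟨by omega, by omega⟩
  have hmn : m ≤ n := (hval m hm).2
  -- the triple windows
  set f : ℕ → Finset ℕ := fun x => {wit n u x - 1, wit n u x, wit n u x + 1} with hf
  set U := T.biUnion f with hU
  have hdisj : ∀ x ∈ T, ∀ y ∈ T, x ≠ y → Disjoint (f x) (f y) := by
    intro x hx y hy hxy
    have hsx := wit_spec (hmemT x hx).1
    have hsy := wit_spec (hmemT y hy).1
    have hsep := wit_sep (hmemT x hx).1 (hmemT y hy).1 hxy
    rw [Finset.disjoint_left]
    intro a ha hb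
    simp only [hf, Finset.mem_insert, Finset.mem_singleton] at ha hb
    omega
  have htriple : ∀ x ∈ T, (f x).card = 3 := by
    intro x hx
    have hsx := wit_spec (hmemT x hx).1
    simp only [hf]
    rw [Finset.card_insert_of_notMem
          (by simp only [Finset.mem_insert, Finset.mem_singleton]; omega),
        Finset.card_insert_of_notMem (by simp only [Finset.mem_singleton]; omega),
        Finset.card_singleton]
  have hUcard : U.card = 3 * T.card := by
    calc U.card = ∑ x ∈ T, (f x).card := Finset.card_biUnion hdisj
    _ = ∑ _x ∈ T, 3 := Finset.sum_congr rfl htriple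
    _ = 3 * T.card := by rw [Finset.sum_const, smul_eq_mul, mul_comm]
  -- V : positions with value ≤ m
  set V := (Finset.Icc 1 (2*n)).filter (fun p => u p ≤ m) with hV
  have hVcard : V.card = 2 * m := by
    have : V = (Finset.Icc 1 m).biUnion (fun k => (Finset.Icc 1 (2*n)).filter (fun p => u p = k)) := by
      ext p
      simp only [hV, Finset.mem_filter, Finset.mem_biUnion, Finset.mem_Icc]
      constructor
      · rintro ⟨⟨h1, h2⟩, h3⟩
        exact ⟨u p, ⟨(hbound p h1 h2).1, h3⟩, ⟨⟨h1, h2⟩, rfl⟩⟩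
      · rintro ⟨k, ⟨hk1, hk2⟩, ⟨h1, h2⟩⟩
        exact ⟨h1, by omega⟩
    have hdisj2 : ∀ a ∈ Finset.Icc 1 m, ∀ b ∈ Finset.Icc 1 m, a ≠ b →
        Disjoint ((Finset.Icc 1 (2*n)).filter (fun p => u p = a))
          ((Finset.Icc 1 (2*n)).filter (fun p => u p = b)) := by
      intro a _ b _ hab
      rw [Finset.disjoint_left]
      intro p hp hq
      rw [Finset.mem_filter] at hp hq
      exact hab (hp.2 ▸ hq.2 ▸ rfl)
    have hsum : ∀ k ∈ Finset.Icc 1 m, ((Finset.Icc 1 (2*n)).filter (fun p => u p = k)).card = 2 := by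
      intro k hk
      rw [Finset.mem_Icc] at hk
      exact hcard k hk.1 (le_trans hk.2 hmn)
    calc V.card = ∑ k ∈ Finset.Icc 1 m, ((Finset.Icc 1 (2*n)).filter (fun p => u p = k)).card := by
          rw [this]; exact Finset.card_biUnion hdisj2
    _ = ∑ _k ∈ Finset.Icc 1 m, 2 := Finset.sum_congr rfl hsum
    _ = 2 * m := by rw [Finset.sum_const, smul_eq_mul, Nat.card_Icc]; omega
  have hUV : U ⊆ V := by
    intro a ha
    rw [hU, Finset.mem_biUnion] at ha
    obtain ⟨x, hx, hax⟩ := ha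
    obtain ⟨hxm, hxle⟩ := hmemT x hx
    obtain ⟨h2, h2n, hl, he, hr, hv⟩ := wit_spec hxm
    simp only [hf, Finset.mem_insert, Finset.mem_singleton] at hax
    rw [hV, Finset.mem_filter, Finset.mem_Icc]
    rcases hax with h | h | h <;> subst h
    · exact ⟨⟨by omega, by omega⟩, by omega⟩
    · exact ⟨⟨by omega, by omega⟩, by omega⟩
    · rw [← he]; exact ⟨⟨by omega, by omega⟩, by omega⟩
  -- an extra element of V not in U
  obtain ⟨x0, hx0T, hx0max⟩ := Finset.exists_max_image T (wit n u) ⟨m, hmT⟩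
  obtain ⟨x02, x02n, x0l, x0e, x0r, x0v⟩ := wit_spec (hmemT x0 hx0T).1
  have hqV : wit n u x0 + 2 ∈ V := by
    rw [hV, Finset.mem_filter, Finset.mem_Icc]
    refine ⟨⟨by omega, by omega⟩, ?_⟩
    have := (hmemT x0 hx0T).2
    omega
  have hqU : wit n u x0 + 2 ∉ U := by
    rw [hU, Finset.mem_biUnion]
    rintro ⟨y, hy, hay⟩
    have hsy := wit_spec (hmemT y hy).1
    have := hx0max y hy
    simp only [hf, Finset.mem_insert, Finset.mem_singleton] at hay
    omega
  have hins : (insert (wit n u x0 + 2) U).card ≤ V.card :=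
    Finset.card_le_card (Finset.insert_subset hqV hUV)
  rw [Finset.card_insert_of_notMem hqU, hUcard, hVcard] at hins
  omega

open Classical in
lemma mesa_finsetization {n : ℕ} {u : ℕ → ℕ} (hu : IsStirling n u) :
    ∃ F : Finset ℕ, (↑F : Set ℕ) = MesaSet n u ∧ F ⊆ Finset.Icc 2 n ∧
      ∀ m ∈ F, 3 * (F.filter (fun x => x ≤ m)).card < 2 * m := by
  have hval : ∀ x ∈ MesaSet n u, 2 ≤ x ∧ x ≤ n := by
    intro x hx
    obtain ⟨i, h2, h2n, hl, he, hr, hv⟩ := hx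
    have hb := hu.2.1 i (by omega) (by omega)
    have hb' := hu.2.1 (i-1) (by omega) (by omega)
    omega
  refine ⟨(Finset.Icc 1 n).filter (fun x => x ∈ MesaSet n u), ?_, ?_, ?_⟩
  · ext x
    simp only [Finset.coe_filter, Set.mem_setOf_eq, Finset.mem_Icc]
    constructor
    · rintro ⟨_, hx⟩; exact hx
    · intro hx; exact ⟨⟨by have := hval x hx; omega, (hval x hx).2⟩, hx⟩
  · intro x hx
    rw [Finset.mem_filter] at hx
    have := hval x hx.2
    exact Finset.mem_Icc.mpr ⟨this.1, this.2⟩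
  · intro m hm
    rw [Finset.mem_filter] at hm
    have := mesa_count hu m hm.2
    have heq : ((Finset.Icc 1 n).filter (fun x => x ∈ MesaSet n u)).filter (fun x => x ≤ m)
        = (Finset.Icc 1 n).filter (fun x => x ∈ MesaSet n u ∧ x ≤ m) :=
      Finset.filter_filter _ _ _
    rw [heq]
    exact this

lemma insert_pair {n : ℕ} {u W : ℕ → ℕ} (hu : IsStirling n u) {g : ℕ} (hg : g ≤ 2*n)
    (hW : ∀ p, W p = if p ≤ g then u p else if p ≤ g + 2 then n + 1 else u (p - 2))
    (H : ∀ m' ∈ MesaSet n u, g + 1 < wit n u m' ∨ wit n u m' + 1 < g) :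
    IsStirling (n+1) W ∧
    MesaSet (n+1) W ⊆ MesaSet n u ∪ {n+1} ∧
    MesaSet n u ⊆ MesaSet (n+1) W ∧
    (1 ≤ g → g + 1 ≤ 2*n → (n+1) ∈ MesaSet (n+1) W) ∧
    (g = 2*n → (n+1) ∉ MesaSet (n+1) W) := by
  obtain ⟨hcard, hbound, hbetween⟩ := hu
  have Wlow : ∀ p, p ≤ g → W p = u p := by
    intro p hp; rw [hW, if_pos hp]
  have Wmid : ∀ p, g + 1 ≤ p → p ≤ g + 2 → W p = n + 1 := by
    intro p h1 h2; rw [hW, if_neg (by omega), if_pos h2]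
  have Whigh : ∀ p, g + 3 ≤ p → W p = u (p - 2) := by
    intro p h1; rw [hW, if_neg (by omega), if_neg (by omega)]
  have WvalN : ∀ p, 1 ≤ p → p ≤ 2*n+2 → W p = n+1 → p = g+1 ∨ p = g+2 := by
    intro p h1 h2 hv
    by_contra hc
    push_neg at hc
    rcases le_or_gt p g with h | h
    · rw [Wlow p h] at hv
      have := hbound p h1 (le_trans h hg)
      omega
    · rw [Whigh p (by omega)] at hv
      have := hbound (p-2) (by omega) (by omega)
      omega
  have Wle : ∀ p, 1 ≤ p → p ≤ 2*n+2 → 1 ≤ W p ∧ W p ≤ n+1 := by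
    intro p h1 h2
    rcases le_or_gt p g with h | h
    · rw [Wlow p h]; have := hbound p h1 (le_trans h hg); omega
    · rcases le_or_gt p (g+2) with h' | h'
      · rw [Wmid p (by omega) h']; omega
      · rw [Whigh p (by omega)]; have := hbound (p-2) (by omega) (by omega); omega
  refine ⟨⟨?_, ?_, ?_⟩, ?_, ?_, ?_, ?_⟩
  · -- counts
    intro k hk1 hk2
    rcases Nat.lt_or_ge k (n+1) with hkn | hkn
    · have hkn' : k ≤ n := by omega
      have himg : (Finset.Icc 1 (2*(n+1))).filter (fun i => W i = k)
          = ((Finset.Icc 1 (2*n)).filter (fun i => u i = k)).image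
              (fun p => if p ≤ g then p else p + 2) := by
        ext p
        simp only [Finset.mem_filter, Finset.mem_image, Finset.mem_Icc]
        constructor
        · rintro ⟨⟨hp1, hp2⟩, hpk⟩
          rcases le_or_gt p g with h | h
          · refine ⟨p, ⟨⟨hp1, le_trans h hg⟩, ?_⟩, if_pos h⟩
            rw [Wlow p h] at hpk; exact hpk
          · rcases le_or_gt p (g+2) with h' | h'
            · rw [Wmid p (by omega) h'] at hpk; omega
            · refine ⟨p - 2, ⟨⟨by omega, by omega⟩, ?_⟩, ?_⟩
              · rw [Whigh p (by omega)] at hpk; exact hpk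
              · rw [if_neg (by omega)]; omega
        · rintro ⟨q, ⟨⟨hq1, hq2⟩, hqk⟩, hqp⟩
          rcases le_or_gt q g with h | h
          · rw [if_pos h] at hqp; subst hqp
            exact ⟨⟨hq1, by omega⟩, by rw [Wlow q h]; exact hqk⟩
          · rw [if_neg (by omega)] at hqp; subst hqp
            refine ⟨⟨by omega, by omega⟩, ?_⟩
            rw [Whigh (q+2) (by omega)]
            exact hqk
      rw [himg, Finset.card_image_of_injOn, hcard k hk1 hkn']
      intro a _ b _ hab
      simp only at hab
      split_ifs at hab <;> omega
    · have hk : k = n+1 := by omega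
      subst hk
      have hset : (Finset.Icc 1 (2*(n+1))).filter (fun i => W i = n+1) = {g+1, g+2} := by
        ext p
        simp only [Finset.mem_filter, Finset.mem_Icc, Finset.mem_insert, Finset.mem_singleton]
        constructor
        · rintro ⟨⟨hp1, hp2⟩, hpk⟩
          exact WvalN p hp1 (by omega) hpk
        · rintro (h | h) <;> subst h
          · exact ⟨⟨by omega, by omega⟩, Wmid _ (by omega) (by omega)⟩
          · exact ⟨⟨by omega, by omega⟩, Wmid _ (by omega) (by omega)⟩
      rw [hset, Finset.card_insert_of_notMem (by simp only [Finset.mem_singleton]; omega),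
        Finset.card_singleton]
  · -- bounds
    intro i h1 h2
    exact Wle i h1 (by omega)
  · -- between
    intro i j l h1 hij hjl hl heq
    by_cases hNi : W i = n+1
    · have hNl : W l = n+1 := by rw [← heq]; exact hNi
      have hi' := WvalN i (by omega) (by omega) hNi
      have hl' := WvalN l (by omega) (by omega) hNl
      omega
    · by_cases hNj : W j = n+1
      · have hWi := Wle i (by omega) (by omega)
        rw [hNj]; omega
      · have hIi : i ≤ g ∨ g+3 ≤ i := by
          by_contra hc; push_neg at hc; exact hNi (Wmid i (by omega) (by omega))
        have hIj : j ≤ g ∨ g+3 ≤ j := by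
          by_contra hc; push_neg at hc; exact hNj (Wmid j (by omega) (by omega))
        have hIl : l ≤ g ∨ g+3 ≤ l := by
          by_contra hc
          push_neg at hc
          have : W l = n+1 := Wmid l (by omega) (by omega)
          rw [← heq] at this
          exact hNi this
        rcases hIi with hi | hi <;> rcases hIj with hj | hj <;> rcases hIl with hl2 | hl2
        · rw [Wlow i hi, Wlow l hl2] at heq
          rw [Wlow i hi, Wlow j hj]
          exact hbetween i j l h1 hij hjl (le_trans hl2 hg) heq
        · rw [Wlow i hi, Whigh l (by omega)] at heq
          rw [Wlow i hi, Wlow j hj]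
          exact hbetween i j (l-2) h1 hij (by omega) (by omega) heq
        · omega
        · rw [Wlow i hi, Whigh l (by omega)] at heq
          rw [Wlow i hi, Whigh j (by omega)]
          exact hbetween i (j-2) (l-2) h1 (by omega) (by omega) (by omega) heq
        · omega
        · omega
        · omega
        · rw [Whigh i (by omega), Whigh l (by omega)] at heq
          rw [Whigh i (by omega), Whigh j (by omega)]
          exact hbetween (i-2) (j-2) (l-2) (by omega) (by omega) (by omega) (by omega) heq
  · -- MesaSet W ⊆ MesaSet u ∪ {n+1}
    intro x hx
    obtain ⟨I, hI2, hI2n, hl, he, hr, hv⟩ := hx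
    have hcases : I + 2 ≤ g ∨ I + 1 = g ∨ I = g ∨ I = g+1 ∨ I = g+2 ∨ I = g+3 ∨ g+4 ≤ I := by
      omega
    rcases hcases with hc | hc | hc | hc | hc | hc | hc
    · refine Set.mem_union_left _ ⟨I, hI2, by omega, ?_, ?_, ?_, ?_⟩
      · rw [← Wlow (I-1) (by omega), ← Wlow I (by omega)]; exact hl
      · rw [← Wlow I (by omega), ← Wlow (I+1) (by omega)]; exact he
      · rw [← Wlow (I+2) (by omega), ← Wlow I (by omega)]; exact hr
      · rw [← Wlow I (by omega)]; exact hv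
    · have h1 : W (I+2) = n+1 := Wmid _ (by omega) (by omega)
      have h2 := Wle I (by omega) (by omega)
      omega
    · have h1 : W I = u I := Wlow _ (by omega)
      have h2 : W (I+1) = n+1 := Wmid _ (by omega) (by omega)
      have := hbound I (by omega) (by omega)
      omega
    · refine Set.mem_union_right _ ?_
      have : W I = n+1 := Wmid _ (by omega) (by omega)
      rw [Set.mem_singleton_iff, ← hv, this]
    · have h1 : W I = n+1 := Wmid _ (by omega) (by omega)
      have h2 : W (I+1) = u (I-1) := Whigh _ (by omega)
      have := hbound (I-1) (by omega) (by omega)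
      omega
    · have h1 : W (I-1) = n+1 := by
        have e : I - 1 = g + 2 := by omega
        rw [e]; exact Wmid _ (by omega) (by omega)
      have h2 : W I = u (I-2) := Whigh _ (by omega)
      have := hbound (I-2) (by omega) (by omega)
      omega
    · obtain ⟨I', rfl⟩ : ∃ I', I = I' + 4 := ⟨I - 4, by omega⟩
      have e1 : W (I' + 3) = u (I' + 1) := Whigh _ (by omega)
      have e2 : W (I' + 4) = u (I' + 2) := Whigh _ (by omega)
      have e3 : W (I' + 5) = u (I' + 3) := Whigh _ (by omega)
      have e4 : W (I' + 6) = u (I' + 4) := Whigh _ (by omega)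
      refine Set.mem_union_left _ ⟨I' + 2, by omega, by omega, ?_, ?_, ?_, ?_⟩
      · show u (I' + 1) < u (I' + 2)
        rw [← e1, ← e2]; exact hl
      · show u (I' + 2) = u (I' + 3)
        rw [← e2, ← e3]; exact he
      · show u (I' + 4) < u (I' + 2)
        rw [← e4, ← e2]; exact hr
      · show u (I' + 2) = x
        rw [← e2]; exact hv
  · -- MesaSet u ⊆ MesaSet W
    intro x hx
    obtain ⟨h2, h2n, hl, he, hr, hv⟩ := wit_spec hx
    rcases H x hx with hH | hH
    · -- g + 1 < wit : mesa at wit + 2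
      have e1 : W (wit n u x + 1) = u (wit n u x - 1) := Whigh _ (by omega)
      have e2 : W (wit n u x + 2) = u (wit n u x) := Whigh _ (by omega)
      have e3 : W (wit n u x + 3) = u (wit n u x + 1) := Whigh _ (by omega)
      have e4 : W (wit n u x + 4) = u (wit n u x + 2) := Whigh _ (by omega)
      refine ⟨wit n u x + 2, by omega, by omega, ?_, ?_, ?_, ?_⟩
      · have e0 : wit n u x + 2 - 1 = wit n u x + 1 := by omega
        rw [e0, e1, e2]; exact hl
      · have e0 : wit n u x + 2 + 1 = wit n u x + 3 := by omega
        rw [e0, e2, e3]; exact he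
      · have e0 : wit n u x + 2 + 2 = wit n u x + 4 := by omega
        rw [e0, e2, e4]; exact hr
      · rw [e2]; exact hv
    · -- wit + 1 < g : mesa at wit
      have e1 : W (wit n u x - 1) = u (wit n u x - 1) := Wlow _ (by omega)
      have e2 : W (wit n u x) = u (wit n u x) := Wlow _ (by omega)
      have e3 : W (wit n u x + 1) = u (wit n u x + 1) := Wlow _ (by omega)
      have e4 : W (wit n u x + 2) = u (wit n u x + 2) := Wlow _ (by omega)
      refine ⟨wit n u x, by omega, by omega, ?_, ?_, ?_, ?_⟩
      · rw [e1, e2]; exact hl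
      · rw [e2, e3]; exact he
      · rw [e4, e2]; exact hr
      · rw [e2]; exact hv
  · -- n+1 is a mesa when 1 ≤ g ≤ 2n-1
    intro hg1 hg2
    have e1 : W g = u g := Wlow _ le_rfl
    have e2 : W (g+1) = n+1 := Wmid _ (by omega) (by omega)
    have e3 : W (g+2) = n+1 := Wmid _ (by omega) (by omega)
    have e4 : W (g+3) = u (g+1) := Whigh _ (by omega)
    have hb1 := hbound g hg1 (by omega)
    have hb2 := hbound (g+1) (by omega) (by omega)
    refine ⟨g+1, by omega, by omega, ?_, ?_, ?_, e2⟩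
    · show W g < W (g+1)
      rw [e1, e2]; omega
    · show W (g+1) = W (g+2)
      rw [e2, e3]
    · show W (g+3) < W (g+1)
      rw [e4, e2]; omega
  · -- n+1 not a mesa when g = 2n
    intro hgn hmem
    obtain ⟨I, hI2, hI2n, hl, he, hr, hv⟩ := hmem
    have := WvalN I (by omega) (by omega) hv
    omega

open Classical in
lemma realize : ∀ (n : ℕ) (F : Finset ℕ), F ⊆ Finset.Icc 2 n →
    (∀ m ∈ F, 3 * (F.filter (fun x => x ≤ m)).card < 2 * m) → (↑F : Set ℕ) ∈ AMS n := by
  intro n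
  induction n with
  | zero =>
    intro F hsub _
    have hF : F = ∅ := by
      rw [Finset.eq_empty_iff_forall_notMem]
      intro x hx
      have := hsub hx
      rw [Finset.mem_Icc] at this
      omega
    subst hF
    refine ⟨fun _ => 0, ⟨?_, ?_, ?_⟩, ?_⟩
    · intro k hk1 hk2; omega
    · intro i h1 h2; omega
    · intro i j l h1 hij hjl hl _; omega
    · ext x
      simp only [Finset.coe_empty, Set.mem_empty_iff_false, iff_false]
      rintro ⟨i, h2, h2n, _⟩
      omega
  | succ n ih =>
    intro F hsub hcnt
    by_cases hF : (n+1) ∈ F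
    · -- need to create the mesa n+1
      set G := F.erase (n+1) with hG
      have hGsub : G ⊆ Finset.Icc 2 n := by
        intro x hx
        rw [hG, Finset.mem_erase] at hx
        have := hsub hx.2
        rw [Finset.mem_Icc] at this ⊢
        have : x ≠ n+1 := hx.1
        omega
      have hGcnt : ∀ m ∈ G, 3 * (G.filter (fun x => x ≤ m)).card < 2 * m := by
        intro m hm
        have hmG := hGsub hm
        rw [Finset.mem_Icc] at hmG
        have h1 : G.filter (fun x => x ≤ m) = (F.filter (fun x => x ≤ m)).erase (n+1) := by
          rw [hG, Finset.filter_erase]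
        have h2 : (n+1) ∉ F.filter (fun x => x ≤ m) := by
          rw [Finset.mem_filter]
          rintro ⟨_, hle⟩
          omega
        rw [h1, Finset.erase_eq_of_notMem h2]
        exact hcnt m (Finset.mem_of_mem_erase (hG ▸ hm))
      obtain ⟨u, hu, hMu⟩ := ih G hGsub hGcnt
      -- counting: find a free gap
      have hFfull : F.filter (fun x => x ≤ n+1) = F := by
        apply Finset.filter_true_of_mem
        intro x hx
        have := hsub hx
        rw [Finset.mem_Icc] at this
        omega
      have hFcard : 3 * F.card < 2 * (n+1) := by
        have := hcnt (n+1) hF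
        rwa [hFfull] at this
      have hGcard : G.card + 1 = F.card := Finset.card_erase_add_one hF
      have hn1 : 1 ≤ n := by omega
      set B := G.biUnion (fun x => {wit n u x - 1, wit n u x, wit n u x + 1}) with hB
      have hBcard : B.card ≤ 3 * G.card := by
        refine le_trans (Finset.card_biUnion_le) ?_
        calc ∑ x ∈ G, ({wit n u x - 1, wit n u x, wit n u x + 1} : Finset ℕ).card
            ≤ ∑ _x ∈ G, 3 := by
              refine Finset.sum_le_sum ?_
              intro x _
              refine le_trans (Finset.card_insert_le _ _) ?_
              refine Nat.succ_le_succ (le_trans (Finset.card_insert_le _ _) ?_)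
              simp
          _ = 3 * G.card := by rw [Finset.sum_const, smul_eq_mul, mul_comm]
      have hnotsub : ¬ (Finset.Icc 1 (2*n-1)) ⊆ B := by
        intro hcon
        have := Finset.card_le_card hcon
        rw [Nat.card_Icc] at this
        omega
      obtain ⟨g, hgIcc, hgB⟩ := Finset.not_subset.mp hnotsub
      rw [Finset.mem_Icc] at hgIcc
      have hmemG : ∀ x, x ∈ MesaSet n u ↔ x ∈ G := by
        intro x
        rw [hMu]; exact Finset.mem_coe
      have hH : ∀ m' ∈ MesaSet n u, g + 1 < wit n u m' ∨ wit n u m' + 1 < g := by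
        intro m' hm'
        have hs := wit_spec hm'
        have hmG : m' ∈ G := (hmemG m').mp hm'
        have h1 : g ∉ ({wit n u m' - 1, wit n u m', wit n u m' + 1} : Finset ℕ) := by
          intro hin
          exact hgB (Finset.mem_biUnion.mpr ⟨m', hmG, hin⟩)
        simp only [Finset.mem_insert, Finset.mem_singleton] at h1
        push_neg at h1
        omega
      obtain ⟨hW1, hW2, hW3, hW4, _⟩ := insert_pair ⟨hu.1, hu.2.1, hu.2.2⟩
        (show g ≤ 2*n by omega)
        (fun p => rfl) hH
      refine ⟨_, hW1, ?_⟩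
      ext x
      constructor
      · intro hx
        rcases hW2 hx with h | h
        · have : x ∈ G := (hmemG x).mp h
          exact Finset.mem_coe.mpr (Finset.mem_of_mem_erase (hG ▸ this))
        · rw [Set.mem_singleton_iff] at h
          subst h
          exact Finset.mem_coe.mpr hF
      · intro hx
        have hxF : x ∈ F := Finset.mem_coe.mp hx
        by_cases hxn : x = n+1
        · subst hxn
          exact hW4 (by omega) (by omega)
        · have hxG : x ∈ G := Finset.mem_erase.mpr ⟨hxn, hxF⟩
          exact hW3 ((hmemG x).mpr hxG)
    · -- n+1 ∉ F : just append the pair at the end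
      have hsub' : F ⊆ Finset.Icc 2 n := by
        intro x hx
        have := hsub hx
        rw [Finset.mem_Icc] at this ⊢
        have : x ≠ n+1 := fun h => hF (h ▸ hx)
        omega
      obtain ⟨u, hu, hMu⟩ := ih F hsub' hcnt
      have hH : ∀ m' ∈ MesaSet n u, (2*n) + 1 < wit n u m' ∨ wit n u m' + 1 < 2*n := by
        intro m' hm'
        have hs := wit_spec hm'
        omega
      obtain ⟨hW1, hW2, hW3, _, hW5⟩ := insert_pair ⟨hu.1, hu.2.1, hu.2.2⟩
        (le_refl (2*n)) (fun p => rfl) hH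
      refine ⟨_, hW1, ?_⟩
      ext x
      constructor
      · intro hx
        rcases hW2 hx with h | h
        · rw [hMu] at h; exact h
        · rw [Set.mem_singleton_iff] at h
          subst h
          exact absurd hx (hW5 rfl)
      · intro hx
        rw [← hMu] at hx
        exact hW3 hx

theorem AMS_erase_top (n : ℕ) (M : Set ℕ) (hM : M ∈ AMS (n+1)) (h : (n+1 : ℕ) ∈ M) :
    M \ {(n+1 : ℕ)} ∈ AMS n := by
  obtain ⟨w, hw, hMw⟩ := hM
  obtain ⟨F, hFcoe, hFsub, hFcnt⟩ := mesa_finsetization hw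
  rw [hMw] at hFcoe
  set F' := F.erase (n+1) with hF'
  have hcoe' : (↑F' : Set ℕ) = M \ {(n+1 : ℕ)} := by
    rw [hF', Finset.coe_erase, hFcoe]
  have hsub' : F' ⊆ Finset.Icc 2 n := by
    intro x hx
    rw [hF', Finset.mem_erase] at hx
    have h2 := hFsub hx.2
    have h1 := hx.1
    rw [Finset.mem_Icc] at h2 ⊢
    omega
  have hcnt' : ∀ m ∈ F', 3 * (F'.filter (fun x => x ≤ m)).card < 2 * m := by
    intro m hm
    have hmI := hsub' hm
    rw [Finset.mem_Icc] at hmI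
    have h1 : F'.filter (fun x => x ≤ m) = (F.filter (fun x => x ≤ m)).erase (n+1) :=
      Finset.filter_erase _ _ _
    have h2 : (n+1) ∉ F.filter (fun x => x ≤ m) := by
      rw [Finset.mem_filter]
      rintro ⟨_, hle⟩
      omega
    rw [h1, Finset.erase_eq_of_notMem h2]
    exact hFcnt m (Finset.mem_of_mem_erase hm)
  have hres := realize n F' hsub' hcnt'
  rwa [hcoe'] at hres
end

section
/- If M ∈ AMS_n with |M| < ⌊(2n−1)/3⌋, then M ∪ {n+1} ∈ AMS_{n+1}. -/
theorem AMS_insert_top (n : ℕ) (M : Set ℕ) (hM : M ∈ AMS n)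
    (h : M.ncard < (2*n - 1) / 3) :
    M ∪ {(n+1 : ℕ)} ∈ AMS (n+1) := by
  obtain ⟨w, ⟨hcount, hbound, hord⟩, hMw⟩ := hM
  -- basic size facts
  have hn : 2 ≤ n := by
    have h1 : 1 ≤ (2*n - 1) / 3 := lt_of_le_of_lt (Nat.zero_le _) h
    have := Nat.le_div_iff_mul_le (by norm_num : 0 < 3) |>.mp h1
    omega
  -- the finset of mesa positions
  set P : Finset ℕ := (Finset.Icc 2 (2*n)).filter
    (fun p => p + 2 ≤ 2*n ∧ w (p-1) < w p ∧ w p = w (p+1) ∧ w (p+2) < w p) with hP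
  have hmemP : ∀ p, p ∈ P ↔ (2 ≤ p ∧ p + 2 ≤ 2*n ∧ w (p-1) < w p ∧ w p = w (p+1)
      ∧ w (p+2) < w p) := by
    intro p
    simp only [hP, Finset.mem_filter, Finset.mem_Icc]
    constructor
    · rintro ⟨⟨h1, h2⟩, h3⟩; exact ⟨h1, h3⟩
    · rintro ⟨h1, h2, h3⟩; exact ⟨⟨h1, by omega⟩, h2, h3⟩
  -- w is injective on P
  have hinj : ∀ p ∈ P, ∀ q ∈ P, w p = w q → p = q := by
    have key : ∀ p q : ℕ, p ∈ P → q ∈ P → p < q → w p = w q → False := by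
      intro p q hp hq hpq hv
      rw [hmemP] at hp hq
      obtain ⟨hp1, hp2, _, hp4, _⟩ := hp
      obtain ⟨hq1, hq2, _, hq4, _⟩ := hq
      have hm1 : 1 ≤ w p := (hbound p (by omega) (by omega)).1
      have hm2 : w p ≤ n := (hbound p (by omega) (by omega)).2
      have hsub : ({p, q, q+1} : Finset ℕ) ⊆
          (Finset.Icc 1 (2*n)).filter (fun i => w i = w p) := by
        intro x hx
        simp only [Finset.mem_insert, Finset.mem_singleton] at hx
        simp only [Finset.mem_filter, Finset.mem_Icc]
        rcases hx with rfl | rfl | rfl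
        · exact ⟨⟨by omega, by omega⟩, rfl⟩
        · exact ⟨⟨by omega, by omega⟩, hv.symm⟩
        · exact ⟨⟨by omega, by omega⟩, by rw [← hq4, hv]⟩
      have hcard : ({p, q, q+1} : Finset ℕ).card = 3 := by
        rw [Finset.card_insert_of_notMem
            (by simp only [Finset.mem_insert, Finset.mem_singleton]; omega),
          Finset.card_insert_of_notMem
            (by simp only [Finset.mem_singleton]; omega), Finset.card_singleton]
      have := Finset.card_le_card hsub
      rw [hcard, hcount (w p) hm1 hm2] at this
      omega
    intro p hp q hq hv
    rcases lt_trichotomy p q with hlt | heq | hgt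
    · exact absurd hv (fun hv => key p q hp hq hlt hv)
    · exact heq
    · exact absurd hv.symm (fun hv => key q p hq hp hgt hv)
  -- M is the image of P under w
  have hMP : M = ↑(P.image w) := by
    rw [← hMw]
    ext m
    simp only [MesaSet, Set.mem_setOf_eq, Finset.coe_image, Set.mem_image,
      Finset.mem_coe]
    constructor
    · rintro ⟨i, h1, h2, h3, h4, h5, h6⟩
      exact ⟨i, (hmemP i).2 ⟨h1, h2, h3, h4, h5⟩, h6⟩
    · rintro ⟨p, hp, rfl⟩
      rw [hmemP] at hp
      exact ⟨p, hp.1, hp.2.1, hp.2.2.1, hp.2.2.2.1, hp.2.2.2.2, rfl⟩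
  have hcardM : M.ncard = P.card := by
    rw [hMP, Set.ncard_coe_finset, Finset.card_image_of_injOn]
    intro p hp q hq hv
    exact hinj p hp q hq hv
  -- find a good gap g
  have hPcard : 3 * P.card < 2*n - 1 := by
    have h1 : M.ncard + 1 ≤ (2*n - 1) / 3 := h
    have := Nat.div_mul_le_self (2*n-1) 3
    have h2 := Nat.mul_le_mul_right 3 h1
    have h3 : (2*n-1)/3 * 3 ≤ 2*n - 1 := Nat.div_mul_le_self _ _
    omega
  set B : Finset ℕ := P.biUnion (fun p => {p-1, p, p+1}) with hB
  have hBcard : B.card ≤ P.card * 3 := by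
    apply Finset.card_biUnion_le_card_mul
    intro p _
    refine le_trans (Finset.card_insert_le _ _) ?_
    have h1 : ({p, p+1} : Finset ℕ).card ≤ 2 :=
      le_trans (Finset.card_insert_le _ _) (by simp)
    omega
  have hex : ∃ g ∈ Finset.Icc 1 (2*n-1), g ∉ B := by
    by_contra hc
    push_neg at hc
    have hsub : Finset.Icc 1 (2*n-1) ⊆ B := fun x hx => hc x hx
    have := Finset.card_le_card hsub
    rw [Nat.card_Icc] at this
    omega
  obtain ⟨g, hgmem, hgB⟩ := hex
  rw [Finset.mem_Icc] at hgmem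
  obtain ⟨hg1, hg2⟩ := hgmem
  have hgood : ∀ p ∈ P, g + 2 ≤ p ∨ p + 2 ≤ g := by
    intro p hp
    have h2p : 2 ≤ p := ((hmemP p).1 hp).1
    have : g ∉ ({p-1, p, p+1} : Finset ℕ) := by
      intro hg
      exact hgB (Finset.mem_biUnion.2 ⟨p, hp, hg⟩)
    simp only [Finset.mem_insert, Finset.mem_singleton] at this
    omega
  -- the new word
  set w' : ℕ → ℕ := fun i => if i ≤ g then w i else if i ≤ g + 2 then n+1 else w (i-2)
    with hw'
  have hA : ∀ i, i ≤ g → w' i = w i := by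
    intro i hi; simp [hw', hi]
  have hMid : ∀ i, g + 1 ≤ i → i ≤ g + 2 → w' i = n+1 := by
    intro i h1 h2; simp only [hw']; rw [if_neg (by omega), if_pos h2]
  have hC : ∀ i, g + 3 ≤ i → w' i = w (i-2) := by
    intro i hi; simp only [hw']; rw [if_neg (by omega), if_neg (by omega)]
  -- values of w' outside the middle are ≤ n
  have hsmall : ∀ i, 1 ≤ i → i ≤ 2*(n+1) → ¬(g+1 ≤ i ∧ i ≤ g+2) → w' i ≤ n := by
    intro i h1 h2 h3
    rcases le_or_gt i g with hle | hlt
    · rw [hA i hle]; exact (hbound i h1 (by omega)).2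
    · have hge : g + 3 ≤ i := by omega
      rw [hC i hge]; exact (hbound (i-2) (by omega) (by omega)).2
  refine ⟨w', ⟨?_, ?_, ?_⟩, ?_⟩
  · -- counting
    intro k hk1 hk2
    rcases Nat.lt_or_ge k (n+1) with hkn | hkn
    · -- k ≤ n
      have hkn : k ≤ n := by omega
      have himg : (Finset.Icc 1 (2*(n+1))).filter (fun i => w' i = k) =
          ((Finset.Icc 1 (2*n)).filter (fun i => w i = k)).image
            (fun j => if j ≤ g then j else j + 2) := by
        ext i
        simp only [Finset.mem_filter, Finset.mem_Icc, Finset.mem_image]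
        constructor
        · rintro ⟨⟨h1, h2⟩, hv⟩
          have hnotmid : ¬(g+1 ≤ i ∧ i ≤ g+2) := by
            intro hmid
            rw [hMid i hmid.1 hmid.2] at hv
            omega
          rcases le_or_gt i g with hle | hlt
          · refine ⟨i, ⟨⟨h1, by omega⟩, by rw [← hA i hle]; exact hv⟩, by simp [hle]⟩
          · have hge : g + 3 ≤ i := by omega
            refine ⟨i - 2, ⟨⟨by omega, by omega⟩, by rw [← hC i hge]; exact hv⟩, ?_⟩
            rw [if_neg (by omega)]
            omega
        · rintro ⟨j, ⟨⟨h1, h2⟩, hv⟩, rfl⟩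
          rcases le_or_gt j g with hle | hlt
          · rw [if_pos hle]
            exact ⟨⟨h1, by omega⟩, by rw [hA j hle]; exact hv⟩
          · rw [if_neg (by omega)]
            refine ⟨⟨by omega, by omega⟩, ?_⟩
            rw [hC (j+2) (by omega)]
            simpa using hv
      rw [himg, Finset.card_image_of_injOn, hcount k hk1 hkn]
      intro a _ b _ hab
      simp only at hab
      split_ifs at hab <;> omega
    · -- k = n+1
      have hk : k = n+1 := by omega
      subst hk
      have hfil : (Finset.Icc 1 (2*(n+1))).filter (fun i => w' i = n+1) =
          {g+1, g+2} := by
        ext i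
        simp only [Finset.mem_filter, Finset.mem_Icc, Finset.mem_insert,
          Finset.mem_singleton]
        constructor
        · rintro ⟨⟨h1, h2⟩, hv⟩
          by_contra hne
          push_neg at hne
          have := hsmall i h1 h2 (by omega)
          omega
        · rintro (rfl | rfl)
          · exact ⟨⟨by omega, by omega⟩, hMid _ le_rfl (by omega)⟩
          · exact ⟨⟨by omega, by omega⟩, hMid _ (by omega) le_rfl⟩
      rw [hfil, Finset.card_insert_of_notMem (by simp), Finset.card_singleton]
  · -- bounds
    intro i h1 h2
    rcases le_or_gt i g with hle | hlt
    · rw [hA i hle]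
      have := hbound i h1 (by omega)
      omega
    · rcases le_or_gt i (g+2) with hle2 | hlt2
      · rw [hMid i (by omega) hle2]; omega
      · rw [hC i (by omega)]
        have := hbound (i-2) (by omega) (by omega)
        omega
  · -- order condition
    intro i j l h1 hij hjl hl hv
    by_cases hiMid : g+1 ≤ i ∧ i ≤ g+2
    · -- then w' i = n+1, so l also in middle, impossible
      rw [hMid i hiMid.1 hiMid.2] at hv
      have hlsm := hsmall l (by omega) hl
      by_cases hlMid : g+1 ≤ l ∧ l ≤ g+2
      · omega
      · have := hlsm hlMid; omega
    · have hism := hsmall i h1 (by omega) hiMid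
      by_cases hlMid : g+1 ≤ l ∧ l ≤ g+2
      · rw [hMid l hlMid.1 hlMid.2] at hv; omega
      · by_cases hjMid : g+1 ≤ j ∧ j ≤ g+2
        · rw [hMid j hjMid.1 hjMid.2]; omega
        · -- all outside middle: translate to old positions
          have hmap : ∀ x, 1 ≤ x → ¬(g+1 ≤ x ∧ x ≤ g+2) →
              w' x = w (if x ≤ g then x else x - 2) := by
            intro x _ hx
            rcases le_or_gt x g with hle | hlt
            · rw [if_pos hle]; exact hA x hle
            · rw [if_neg (by omega)]; exact hC x (by omega)
          rw [hmap i h1 hiMid, hmap l (by omega) hlMid] at hv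
          rw [hmap i h1 hiMid, hmap j (by omega) hjMid]
          exact hord _ _ _ (by split_ifs <;> omega) (by split_ifs <;> omega)
            (by split_ifs <;> omega) (by split_ifs <;> omega) hv
  · -- mesa set
    rw [← hMw]
    ext m
    simp only [MesaSet, Set.mem_setOf_eq, Set.mem_union, Set.mem_singleton_iff]
    constructor
    · rintro ⟨j, hj2, hj2n, hm1, hm2, hm3, rfl⟩
      by_cases hjMid : g+1 ≤ j ∧ j ≤ g+2
      · right; exact hMid j hjMid.1 hjMid.2
      · left
        have hjsm := hsmall j (by omega) (by omega) hjMid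
        rcases le_or_gt j g with hle | hlt
        · -- j ≤ g; j+1 must avoid middle values ≤ n... check j+1
          have hj1 : j + 1 ≤ g := by
            by_contra hc
            have : j = g := by omega
            rw [this] at hm2
            rw [hA g le_rfl] at hm2
            rw [hMid (g+1) le_rfl (by omega)] at hm2
            have := (hbound g (by omega) (by omega)).2
            omega
          have hj2g : j + 2 ≤ g := by
            by_contra hc
            have : j + 2 = g + 1 := by omega
            rw [this, hMid (g+1) le_rfl (by omega)] at hm3
            rw [hA j hle] at hm3
            have := (hbound j (by omega) (by omega)).2
            omega
          refine ⟨j, hj2, by omega, ?_, ?_, ?_, ?_⟩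
          · rw [← hA (j-1) (by omega), ← hA j hle]; exact hm1
          · rw [← hA j hle, ← hA (j+1) hj1]; exact hm2
          · rw [← hA (j+2) hj2g, ← hA j hle]; exact hm3
          · rw [← hA j hle]
        · have hge : g + 3 ≤ j := by omega
          have hjm1 : g + 3 ≤ j - 1 := by
            by_contra hc
            have : j - 1 = g + 2 := by omega
            rw [this, hMid (g+2) (by omega) le_rfl] at hm1
            omega
          refine ⟨j - 2, by omega, by omega, ?_, ?_, ?_, ?_⟩
          · have e1 : j - 2 - 1 = j - 1 - 2 := by omega
            rw [e1, ← hC (j-1) hjm1]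
            have e2 : j - 2 = j - 2 := rfl
            rw [← hC j hge]
            exact hm1
          · rw [← hC j hge]
            have e1 : j - 2 + 1 = j + 1 - 2 := by omega
            rw [e1, ← hC (j+1) (by omega)]
            exact hm2
          · have e1 : j - 2 + 2 = j + 2 - 2 := by omega
            rw [e1, ← hC (j+2) (by omega), ← hC j hge]
            exact hm3
          · rw [← hC j hge]
    · rintro (hmM | rfl)
      · obtain ⟨p, hp1, hp2, hp3, hp4, hp5, rfl⟩ := hmM
        have hpP : p ∈ P := (hmemP p).2 ⟨hp1, hp2, hp3, hp4, hp5⟩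
        rcases hgood p hpP with hcase | hcase
        · -- g + 2 ≤ p : mesa at p + 2
          refine ⟨p + 2, by omega, by omega, ?_, ?_, ?_, ?_⟩
          · have e1 : p + 2 - 1 = p + 1 := by omega
            rw [e1, hC (p+1) (by omega), hC (p+2) (by omega)]
            simpa using hp3
          · rw [hC (p+2) (by omega), hC (p+3) (by omega)]
            simpa using hp4
          · rw [hC (p+4) (by omega), hC (p+2) (by omega)]
            simpa using hp5
          · rw [hC (p+2) (by omega)]
            simp
        · -- p + 2 ≤ g : mesa at p
          refine ⟨p, hp1, by omega, ?_, ?_, ?_, ?_⟩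
          · rw [hA (p-1) (by omega), hA p (by omega)]; exact hp3
          · rw [hA p (by omega), hA (p+1) (by omega)]; exact hp4
          · rw [hA (p+2) (by omega), hA p (by omega)]; exact hp5
          · rw [hA p (by omega)]
      · -- the new mesa n+1 at position g+1
        refine ⟨g + 1, by omega, by omega, ?_, ?_, ?_, ?_⟩
        · show w' g < w' (g+1)
          rw [hA g le_rfl, hMid (g+1) le_rfl (by omega)]
          have := (hbound g (by omega) (by omega)).2
          omega
        · rw [hMid (g+1) le_rfl (by omega), hMid (g+2) (by omega) le_rfl]
        · rw [hC (g+3) (by omega), hMid (g+1) le_rfl (by omega)]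
          have : g + 3 - 2 = g + 1 := by omega
          rw [this]
          have := (hbound (g+1) (by omega) (by omega)).2
          omega
        · rw [hMid (g+1) le_rfl (by omega)]
end

section
/- For every k ≥ 1, |AMS_{3k+1}| = 2|AMS_{3k}|. -/
namespace StirlingPerm

open Finset

-- Moving a letter pair passes through a word with one letter missing, hence the alphabet `V`.
structure IsStirlingOn (V : Finset ℕ) (L : ℕ) (w : ℕ → ℕ) : Prop where
  card_filter_eq_two : ∀ k ∈ V, ((Icc 1 L).filter (fun i => w i = k)).card = 2
  mem : ∀ i, 1 ≤ i → i ≤ L → w i ∈ V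
  lt_of_between : ∀ i j l, 1 ≤ i → i < j → j < l → l ≤ L → w i = w l → w i < w j

theorem isStirling_iff {n : ℕ} {w : ℕ → ℕ} :
    IsStirling n w ↔ IsStirlingOn (Icc 1 n) (2 * n) w := by
  constructor
  · rintro ⟨hcard, hmem, hlt⟩
    exact ⟨fun k hk => hcard k (mem_Icc.1 hk).1 (mem_Icc.1 hk).2,
      fun i h1 h2 => mem_Icc.2 (hmem i h1 h2), hlt⟩
  · rintro ⟨hcard, hmem, hlt⟩
    exact ⟨fun k h1 h2 => hcard k (mem_Icc.2 ⟨h1, h2⟩), fun i h1 h2 => mem_Icc.1 (hmem i h1 h2),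
      hlt⟩

section IsStirlingOn

variable {V : Finset ℕ} {L : ℕ} {w : ℕ → ℕ}

theorem IsStirlingOn.no_triple (h : IsStirlingOn V L w) {x y z : ℕ} (hx : 1 ≤ x) (hxy : x < y)
    (hyz : y < z) (hz : z ≤ L) (hwxy : w x = w y) (hwyz : w y = w z) : False := by
  have := h.lt_of_between x y z hx hxy hyz hz (hwxy.trans hwyz)
  omega

theorem IsStirlingOn.eq_or_eq_of_pair (h : IsStirlingOn V L w) {p x : ℕ} (hp : 1 ≤ p)
    (hpL : p + 1 ≤ L) (hpair : w p = w (p + 1)) (hx : 1 ≤ x) (hxL : x ≤ L) (hxp : w x = w p) :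
    x = p ∨ x = p + 1 := by
  by_contra hne
  rcases Nat.lt_or_gt_of_ne (show x ≠ p by omega) with hlt | hgt
  · exact h.no_triple hx hlt (Nat.lt_succ_self p) hpL hxp hpair
  · exact h.no_triple hp (Nat.lt_succ_self p) (show p + 1 < x by omega) hxL hpair
      (hpair.symm.trans hxp.symm)

theorem IsStirlingOn.exists_pair_of_max (h : IsStirlingOn V L w) {c : ℕ} (hc : c ∈ V)
    (hmax : ∀ x ∈ V, x ≤ c) : ∃ g, g + 2 ≤ L ∧ w (g + 1) = c ∧ w (g + 2) = c := by
  obtain ⟨x, hx, y, hy, hxy⟩ : ∃ x ∈ (Icc 1 L).filter (fun i => w i = c),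
      ∃ y ∈ (Icc 1 L).filter (fun i => w i = c), x < y := by
    obtain ⟨a, ha, b, hb, hab⟩ := one_lt_card.1 (h.card_filter_eq_two c hc ▸ one_lt_two)
    rcases Nat.lt_or_gt_of_ne hab with hlt | hlt
    exacts [⟨a, ha, b, hb, hlt⟩, ⟨b, hb, a, ha, hlt⟩]
  simp only [mem_filter, mem_Icc] at hx hy
  have hyx : y = x + 1 := by
    by_contra hne
    have := h.lt_of_between x (x + 1) y hx.1.1 (Nat.lt_succ_self x) (by omega) hy.1.2
      (hx.2.trans hy.2.symm)
    have := hmax _ (h.mem (x + 1) (by omega) (by omega))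
    omega
  refine ⟨x - 1, by omega, ?_, ?_⟩
  · rw [Nat.sub_add_cancel hx.1.1]; exact hx.2
  · rw [show x - 1 + 2 = y by omega]; exact hy.2

end IsStirlingOn

def insertPair (w : ℕ → ℕ) (g c : ℕ) : ℕ → ℕ :=
  fun i => if i ≤ g then w i else if i ≤ g + 2 then c else w (i - 2)

def erasePair (w : ℕ → ℕ) (g : ℕ) : ℕ → ℕ :=
  fun i => w (if i ≤ g then i else i + 2)

section WordSurgery

variable {w : ℕ → ℕ} {g c i : ℕ}

theorem insertPair_of_le (h : i ≤ g) : insertPair w g c i = w i := if_pos h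

theorem insertPair_of_lt_of_le (h1 : g < i) (h2 : i ≤ g + 2) : insertPair w g c i = c := by
  simp [insertPair, h2, Nat.not_le.2 h1]

theorem insertPair_add_two (h : g < i) : insertPair w g c (i + 2) = w i := by
  simp [insertPair, show ¬ i + 2 ≤ g by omega, show ¬ i + 2 ≤ g + 2 by omega]

theorem insertPair_cases (w : ℕ → ℕ) (g c i : ℕ) :
    (i ≤ g ∧ insertPair w g c i = w i) ∨ (g < i ∧ i ≤ g + 2 ∧ insertPair w g c i = c) ∨
      (g + 2 < i ∧ insertPair w g c i = w (i - 2)) := by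
  unfold insertPair
  split_ifs <;> omega

theorem erasePair_of_le (h : i ≤ g) : erasePair w g i = w i := by simp [erasePair, h]

theorem erasePair_of_lt (h : g < i) : erasePair w g i = w (i + 2) := by
  simp [erasePair, Nat.not_le.2 h]

theorem insertPair_erasePair (h1 : w (g + 1) = c) (h2 : w (g + 2) = c) :
    insertPair (erasePair w g) g c = w := by
  funext i
  rcases insertPair_cases (erasePair w g) g c i with ⟨hi, e⟩ | ⟨hi1, hi2, e⟩ | ⟨hi, e⟩ <;>
    rw [e]
  · exact erasePair_of_le hi
  · obtain rfl | rfl : i = g + 1 ∨ i = g + 2 := by omega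
    exacts [h1.symm, h2.symm]
  · rw [erasePair_of_lt (by omega), Nat.sub_add_cancel (by omega)]

end WordSurgery

theorem card_filter_Icc_add_one (f : ℕ → ℕ) (k L : ℕ) :
    ((Icc 1 (L + 1)).filter (fun i => f i = k)).card =
      ((Icc 1 L).filter (fun i => f i = k)).card + if f (L + 1) = k then 1 else 0 := by
  simp only [card_filter]
  exact sum_Icc_succ_top (by omega) _

theorem card_filter_insertPair {g L : ℕ} (hg : g ≤ L) (w : ℕ → ℕ) (c k : ℕ) :
    ((Icc 1 (L + 2)).filter (fun i => insertPair w g c i = k)).card =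
      ((Icc 1 L).filter (fun i => w i = k)).card + if c = k then 2 else 0 := by
  induction L, hg using Nat.le_induction with
  | base =>
    rw [card_filter_Icc_add_one, card_filter_Icc_add_one, insertPair_of_lt_of_le (by omega) le_rfl,
      insertPair_of_lt_of_le (by omega) (by omega),
      filter_congr fun i hi => by rw [insertPair_of_le (mem_Icc.1 hi).2]]
    split_ifs <;> rfl
  | succ L hgL ih =>
    rw [show L + 1 + 2 = L + 2 + 1 by ring, card_filter_Icc_add_one, ih, card_filter_Icc_add_one,
      show L + 2 + 1 = L + 1 + 2 by ring, insertPair_add_two (by omega)]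
    ring

section IsStirlingOn

variable {V : Finset ℕ} {L : ℕ} {w : ℕ → ℕ} {g c : ℕ}

theorem IsStirlingOn.insertPair (h : IsStirlingOn V L w) (hc : c ∉ V) (hg : g ≤ L)
    (hstraddle : ∀ i j, 1 ≤ i → i ≤ g → g < j → j ≤ L → w i = w j → w i < c) :
    IsStirlingOn (insert c V) (L + 2) (insertPair w g c) where
  card_filter_eq_two k hk := by
    rw [card_filter_insertPair hg]
    rcases eq_or_ne c k with rfl | hck
    · rw [filter_eq_empty_iff.2 fun i hi (hwi : w i = c) =>
        hc (hwi ▸ h.mem i (mem_Icc.1 hi).1 (mem_Icc.1 hi).2)]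
      simp
    · rw [if_neg hck, h.card_filter_eq_two k ((mem_insert.1 hk).resolve_left hck.symm)]
  mem i hi hiL := by
    rcases insertPair_cases w g c i with ⟨hi', e⟩ | ⟨-, -, e⟩ | ⟨hi', e⟩ <;> rw [e]
    · exact mem_insert_of_mem (h.mem i hi (by omega))
    · exact mem_insert_self c V
    · exact mem_insert_of_mem (h.mem (i - 2) (by omega) (by omega))
  lt_of_between i j l hi hij hjl hl heq := by
    have hne : ∀ x, 1 ≤ x → x ≤ L → w x ≠ c := fun x hx hxL hxc => hc (hxc ▸ h.mem x hx hxL)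
    -- An end of the triple inside the new block carries `c`, which `w` avoids; otherwise compare
    -- in `w`, with `hstraddle` when the middle lies in the block.
    rcases insertPair_cases w g c i with ⟨hi', ei⟩ | ⟨hi1, hi2, ei⟩ | ⟨hi', ei⟩ <;>
    rcases insertPair_cases w g c l with ⟨hl', el⟩ | ⟨hl1, hl2, el⟩ | ⟨hl', el⟩ <;>
    rcases insertPair_cases w g c j with ⟨hj', ej⟩ | ⟨hj1, hj2, ej⟩ | ⟨hj', ej⟩ <;>
    rw [ei, ej] <;> rw [ei, el] at heq <;>
    first
    | omega
    | exact absurd heq (hne _ (by omega) (by omega))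
    | exact absurd heq.symm (hne _ (by omega) (by omega))
    | exact h.lt_of_between _ _ _ (by omega) (by omega) (by omega) (by omega) heq
    | exact hstraddle _ _ (by omega) (by omega) (by omega) (by omega) heq

theorem IsStirlingOn.erasePair (h : IsStirlingOn V (L + 2) w) (hg : g ≤ L)
    (h1 : w (g + 1) = c) (h2 : w (g + 2) = c) :
    IsStirlingOn (V.erase c) L (erasePair w g) where
  card_filter_eq_two k hk := by
    have := card_filter_insertPair hg (StirlingPerm.erasePair w g) c k
    rw [insertPair_erasePair h1 h2, if_neg (ne_of_mem_erase hk).symm,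
      h.card_filter_eq_two k (mem_of_mem_erase hk)] at this
    omega
  mem i hi hiL := by
    have hx : 1 ≤ (if i ≤ g then i else i + 2) ∧ (if i ≤ g then i else i + 2) ≤ L + 2 := by
      split_ifs <;> omega
    refine mem_erase.2 ⟨fun hxc => ?_, h.mem _ hx.1 hx.2⟩
    have := h.eq_or_eq_of_pair (p := g + 1) (by omega) (by omega) (h1.trans h2.symm) hx.1 hx.2
      (hxc.trans h1.symm)
    split_ifs at this <;> omega
  lt_of_between i j l hi hij hjl hl heq :=
    h.lt_of_between _ _ _ (by split_ifs <;> omega) (by split_ifs <;> omega)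
      (by split_ifs <;> omega) (by split_ifs <;> omega) heq

end IsStirlingOn

def IsMesaAt (w : ℕ → ℕ) (i : ℕ) : Prop :=
  w (i - 1) < w i ∧ w i = w (i + 1) ∧ w (i + 2) < w i

def mesas (L : ℕ) (w : ℕ → ℕ) : Set ℕ :=
  {m | ∃ i, 2 ≤ i ∧ i + 2 ≤ L ∧ IsMesaAt w i ∧ w i = m}

theorem MesaSet_eq_mesas (n : ℕ) (w : ℕ → ℕ) : MesaSet n w = mesas (2 * n) w := by
  ext m
  simp only [MesaSet, mesas, IsMesaAt, and_assoc]

theorem mem_AMS_iff {n : ℕ} {M : Set ℕ} :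
    M ∈ AMS n ↔ ∃ w, IsStirlingOn (Icc 1 n) (2 * n) w ∧ mesas (2 * n) w = M := by
  simp only [AMS, isStirling_iff, MesaSet_eq_mesas]
  rfl

section Mesas

variable {V : Finset ℕ} {L : ℕ} {w : ℕ → ℕ} {g c i : ℕ}

theorem IsStirlingOn.mesas_subset (h : IsStirlingOn V L w) : mesas L w ⊆ V := by
  rintro _ ⟨i, hi, hiL, -, rfl⟩
  exact h.mem i (by omega) (by omega)

theorem IsMesaAt.add_three_le {j : ℕ} (hi : IsMesaAt w i) (hj : IsMesaAt w j) (hij : i < j) :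
    i + 3 ≤ j := by
  by_contra hlt
  obtain rfl | rfl : j = i + 1 ∨ j = i + 2 := by omega
  · have := hj.1
    simp only [Nat.add_sub_cancel] at this
    have := hi.2.1
    omega
  · have := hj.1
    rw [show i + 2 - 1 = i + 1 by omega] at this
    have := hi.2
    omega

theorem isMesaAt_iff_of_eq {v : ℕ → ℕ} {j : ℕ} (h0 : v (i - 1) = w (j - 1)) (h1 : v i = w j)
    (h2 : v (i + 1) = w (j + 1)) (h3 : v (i + 2) = w (j + 2)) : IsMesaAt v i ↔ IsMesaAt w j := by
  simp only [IsMesaAt, h0, h1, h2, h3]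

theorem isMesaAt_insertPair_of_le (h : i + 2 ≤ g) :
    IsMesaAt (insertPair w g c) i ↔ IsMesaAt w i :=
  isMesaAt_iff_of_eq (insertPair_of_le (by omega)) (insertPair_of_le (by omega))
    (insertPair_of_le (by omega)) (insertPair_of_le h)

theorem isMesaAt_insertPair_add_two (h : g + 2 ≤ i) :
    IsMesaAt (insertPair w g c) (i + 2) ↔ IsMesaAt w i :=
  isMesaAt_iff_of_eq (by rw [show i + 2 - 1 = i - 1 + 2 by omega, insertPair_add_two (by omega)])
    (insertPair_add_two (by omega))
    (by rw [show i + 2 + 1 = i + 1 + 2 by ring, insertPair_add_two (by omega)])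
    (insertPair_add_two (by omega))

theorem IsMesaAt.insertPair_of_lt (hi : IsMesaAt w i) (hc : c < w i) :
    IsMesaAt (insertPair w (i + 1) c) i := by
  refine ⟨?_, ?_, ?_⟩ <;>
    simp only [insertPair_of_le (show i - 1 ≤ i + 1 by omega),
      insertPair_of_le (show i ≤ i + 1 by omega), insertPair_of_le (le_refl (i + 1)),
      insertPair_of_lt_of_le (show i + 1 < i + 2 by omega) (show i + 2 ≤ i + 1 + 2 by omega)]
  exacts [hi.1, hi.2.1, hc]

theorem isMesaAt_insertPair_self (h0 : w g < c) (h1 : w (g + 1) < c) :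
    IsMesaAt (insertPair w g c) (g + 1) := by
  refine ⟨?_, ?_, ?_⟩
  · rw [Nat.add_sub_cancel, insertPair_of_le le_rfl, insertPair_of_lt_of_le (by omega) (by omega)]
    exact h0
  · rw [insertPair_of_lt_of_le (by omega) (by omega), insertPair_of_lt_of_le (by omega) (by omega)]
  · rw [insertPair_add_two (by omega), insertPair_of_lt_of_le (by omega) (by omega)]
    exact h1

theorem mesas_insertPair_subset (hw : ∀ i, 1 ≤ i → i ≤ L → w i < c) (hg : g ≤ L) :
    mesas (L + 2) (insertPair w g c) ⊆ insert c (mesas L w) := by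
  rintro _ ⟨i, hi2, hiL, hi, rfl⟩
  rcases eq_or_ne (insertPair w g c i) c with hic | hic
  · exact .inl hic
  right
  have hlt : ∀ x, 1 ≤ x → x ≤ L + 2 → insertPair w g c x ≠ c → x ≤ g ∨ g + 2 < x := by
    intro x hx hxL hxc
    rcases insertPair_cases w g c x with ⟨hx', -⟩ | ⟨-, -, e⟩ | ⟨hx', -⟩
    exacts [.inl hx', absurd e hxc, .inr hx']
  have hmc : insertPair w g c i < c := by
    rcases insertPair_cases w g c i with ⟨hi', e⟩ | ⟨-, -, e⟩ | ⟨hi', e⟩ <;> rw [e] at hic ⊢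
    exacts [hw i (by omega) (by omega), absurd rfl hic, hw (i - 2) (by omega) (by omega)]
  have h0 := hlt (i - 1) (by omega) (by omega) (by have := hi.1; omega)
  have h1 := hlt i (by omega) (by omega) hic
  have h2 := hlt (i + 2) (by omega) (by omega) (by have := hi.2.2; omega)
  rcases (show i + 2 ≤ g ∨ g + 4 ≤ i by omega) with hleft | hright
  · exact ⟨i, hi2, by omega, (isMesaAt_insertPair_of_le hleft).1 hi,
      (insertPair_of_le (by omega)).symm⟩
  · obtain ⟨i, rfl⟩ : ∃ i', i = i' + 2 := ⟨i - 2, by omega⟩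
    exact ⟨i, by omega, by omega, (isMesaAt_insertPair_add_two (by omega)).1 hi,
      (insertPair_add_two (by omega)).symm⟩

theorem subset_mesas_insertPair
    (havoid : ∀ i, 2 ≤ i → i + 2 ≤ L → IsMesaAt w i → i + 2 ≤ g ∨ g + 2 ≤ i) :
    mesas L w ⊆ mesas (L + 2) (insertPair w g c) := by
  rintro _ ⟨i, hi2, hiL, hi, rfl⟩
  rcases havoid i hi2 hiL hi with hleft | hright
  · exact ⟨i, hi2, by omega, (isMesaAt_insertPair_of_le hleft).2 hi, insertPair_of_le (by omega)⟩
  · exact ⟨i + 2, by omega, by omega, (isMesaAt_insertPair_add_two hright).2 hi,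
      insertPair_add_two (by omega)⟩

theorem mem_mesas_insertPair_self (hg : 1 ≤ g) (hgL : g + 1 ≤ L) (h0 : w g < c)
    (h1 : w (g + 1) < c) : c ∈ mesas (L + 2) (insertPair w g c) :=
  ⟨g + 1, by omega, by omega, isMesaAt_insertPair_self h0 h1,
    insertPair_of_lt_of_le (by omega) (by omega)⟩

theorem notMem_mesas_insertPair_end (h : IsStirlingOn V L w) (hc : c ∉ V) :
    c ∉ mesas (L + 2) (insertPair w L c) := by
  rintro ⟨i, hi2, hiL, -, hic⟩
  rw [insertPair_of_le (by omega)] at hic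
  exact hc (hic ▸ h.mem i (by omega) (by omega))

theorem mem_mesas_erasePair {p m : ℕ} (hp : IsMesaAt w p) (hp2 : 2 ≤ p) (hpL : p + 1 ≤ L + 2)
    (hm : m ∈ mesas (L + 2) w) (hmp : m ≠ w p) : m ∈ mesas L (erasePair w (p - 1)) := by
  obtain ⟨i, hi2, hiL, hi, rfl⟩ := hm
  have hw : insertPair (erasePair w (p - 1)) (p - 1) (w p) = w :=
    insertPair_erasePair (by rw [Nat.sub_add_cancel (by omega)])
      (by rw [show p - 1 + 2 = p + 1 by omega]; exact hp.2.1.symm)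
  rcases Nat.lt_or_gt_of_ne (show i ≠ p by rintro rfl; exact hmp rfl) with hip | hpi
  · have hleft : i + 2 ≤ p - 1 := by have := hi.add_three_le hp hip; omega
    rw [← hw] at hi
    exact ⟨i, hi2, by omega, (isMesaAt_insertPair_of_le hleft).1 hi, erasePair_of_le (by omega)⟩
  · obtain ⟨i, rfl⟩ : ∃ i', i = i' + 2 := ⟨i - 2, by omega⟩
    have hright : p - 1 + 2 ≤ i := by have := hp.add_three_le hi hpi; omega
    rw [← hw] at hi
    exact ⟨i, by omega, by omega, (isMesaAt_insertPair_add_two hright).1 hi,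
      erasePair_of_lt (by omega)⟩

end Mesas

structure SortedPairsAfter (s t : ℕ) (w : ℕ → ℕ) : Prop where
  pair_eq : ∀ j < t, w (s + 2 * j + 1) = w (s + 2 * j + 2)
  strictMonoOn : StrictMonoOn (fun j => w (s + 2 * j + 1)) (Set.Iio t)

namespace SortedPairsAfter

variable {V : Finset ℕ} {L s t : ℕ} {w : ℕ → ℕ}

theorem zero : SortedPairsAfter s 0 w :=
  ⟨fun j hj => absurd hj (Nat.not_lt_zero j), fun j hj => absurd hj (Nat.not_lt_zero j)⟩

theorem add_one_le_of_isMesaAt (hs : SortedPairsAfter s t w) (h : IsStirlingOn V L w)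
    (htL : s + 2 * t ≤ L) {i : ℕ} (hi2 : 2 ≤ i) (hiL : i + 2 ≤ s + 2 * t) (hi : IsMesaAt w i) :
    i + 1 ≤ s := by
  by_contra hsi
  obtain rfl | ⟨q, rfl | rfl⟩ : i = s ∨ ∃ q, i = s + 2 * q + 1 ∨ i = s + 2 * q + 2 := by
    rcases (show s ≤ i by omega).eq_or_lt with his | his
    exacts [.inl his.symm, .inr ⟨(i - s - 1) / 2, by omega⟩]
  · have := hs.pair_eq 0 (by omega)
    exact h.no_triple (x := i) (by omega) (Nat.lt_succ_self i) (Nat.lt_succ_self (i + 1)) (by omega)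
      hi.2.1 (by simpa using this)
  · have hlt := hs.strictMonoOn (a := q) (b := q + 1) (Set.mem_Iio.2 (by omega))
      (Set.mem_Iio.2 (by omega)) (Nat.lt_succ_self q)
    dsimp only at hlt
    rw [show s + 2 * (q + 1) + 1 = s + 2 * q + 1 + 2 by ring] at hlt
    exact absurd hi.2.2 (not_lt.2 hlt.le)
  · have := hs.pair_eq q (by omega)
    exact h.no_triple (x := s + 2 * q + 1) (by omega) (Nat.lt_succ_self _)
      (Nat.lt_succ_self _) (by omega) this hi.2.1

theorem ne_of_le_of_lt (hs : SortedPairsAfter s t w) (h : IsStirlingOn V L w) (htL : s + 2 * t ≤ L)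
    {d i j : ℕ} (hi : 1 ≤ i) (hid : i ≤ s + 2 * d) (hdj : s + 2 * d < j) (hj : j ≤ s + 2 * t) :
    w i ≠ w j := by
  intro heq
  obtain ⟨q, rfl | rfl⟩ : ∃ q, j = s + 2 * q + 1 ∨ j = s + 2 * q + 2 :=
    ⟨(j - s - 1) / 2, by omega⟩
  · exact h.no_triple hi (by omega) (Nat.lt_succ_self _) (by omega) heq (hs.pair_eq q (by omega))
  · have := hs.pair_eq q (by omega)
    exact h.no_triple (y := s + 2 * q + 1) hi (by omega) (Nat.lt_succ_self _) (by omega)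
      (heq.trans this.symm) this

theorem erasePair (hs : SortedPairsAfter (s + 2) t w) {g : ℕ} (hg : g ≤ s) :
    SortedPairsAfter s t (StirlingPerm.erasePair w g) := by
  have e : ∀ j, StirlingPerm.erasePair w g (s + j + 1) = w (s + 2 + j + 1) := fun j => by
    rw [erasePair_of_lt (by omega)]; ring_nf
  refine ⟨fun j hj => ?_, fun a ha b hb hab => ?_⟩
  · rw [show s + 2 * j + 2 = s + (2 * j + 1) + 1 by ring, e, e]
    convert hs.pair_eq j hj using 2; ring
  · simp only [e]
    exact hs.strictMonoOn ha hb hab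

theorem insertPair (hs : SortedPairsAfter s t w) {c d : ℕ} (hdt : d ≤ t)
    (hbelow : ∀ j < d, w (s + 2 * j + 1) < c)
    (habove : ∀ j, d ≤ j → j < t → c < w (s + 2 * j + 1)) :
    SortedPairsAfter s (t + 1) (StirlingPerm.insertPair w (s + 2 * d) c) := by
  have e_lt : ∀ j < d, ∀ r ≤ 2, StirlingPerm.insertPair w (s + 2 * d) c (s + 2 * j + r) =
      w (s + 2 * j + r) := fun j hj r hr => insertPair_of_le (by omega)
  have e_eq : ∀ r, 1 ≤ r → r ≤ 2 → StirlingPerm.insertPair w (s + 2 * d) c (s + 2 * d + r) = c :=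
    fun r hr1 hr2 => insertPair_of_lt_of_le (by omega) (by omega)
  have e_gt : ∀ j, d < j → ∀ r ≥ 1, StirlingPerm.insertPair w (s + 2 * d) c (s + 2 * j + r) =
      w (s + 2 * (j - 1) + r) := fun j hj r hr => by
    rw [show s + 2 * j + r = s + 2 * (j - 1) + r + 2 by omega, insertPair_add_two (by omega)]
  refine ⟨fun j hj => ?_, fun a ha b hb hab => ?_⟩
  · rcases lt_trichotomy j d with hjd | rfl | hjd
    · rw [e_lt j hjd 1 (by omega), e_lt j hjd 2 le_rfl]
      exact hs.pair_eq j (by omega)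
    · rw [e_eq 1 le_rfl (by omega), e_eq 2 (by omega) le_rfl]
    · rw [e_gt j hjd 1 le_rfl, e_gt j hjd 2 (by omega)]
      exact hs.pair_eq (j - 1) (by omega)
  · simp only [Set.mem_Iio] at ha hb
    dsimp only
    rcases lt_trichotomy b d with hbd | rfl | hbd
    · rw [e_lt a (by omega) 1 (by omega), e_lt b hbd 1 (by omega)]
      exact hs.strictMonoOn (Set.mem_Iio.2 (by omega)) (Set.mem_Iio.2 (by omega)) hab
    · rw [e_lt a hab 1 (by omega), e_eq 1 le_rfl (by omega)]
      exact hbelow a hab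
    · rw [e_gt b hbd 1 le_rfl]
      have hc := habove (b - 1) (by omega) (by omega)
      rcases lt_trichotomy a d with had | rfl | had
      · rw [e_lt a had 1 (by omega)]
        exact (hbelow a had).trans hc
      · rwa [e_eq 1 le_rfl (by omega)]
      · rw [e_gt a had 1 le_rfl]
        exact hs.strictMonoOn (Set.mem_Iio.2 (by omega)) (Set.mem_Iio.2 (by omega)) (by omega)

theorem exists_insert_index (hs : SortedPairsAfter s t w) {c : ℕ}
    (hc : ∀ j < t, w (s + 2 * j + 1) ≠ c) :
    ∃ d ≤ t, (∀ j < d, w (s + 2 * j + 1) < c) ∧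
      ∀ j, d ≤ j → j < t → c < w (s + 2 * j + 1) := by
  classical
  have hP : ∃ d, t ≤ d ∨ c < w (s + 2 * d + 1) := ⟨t, .inl le_rfl⟩
  refine ⟨Nat.find hP, Nat.find_min' hP (.inl le_rfl), fun j hj => ?_, fun j hdj hjt => ?_⟩
  · have := Nat.find_min hP hj
    simp only [not_or, not_le, not_lt] at this
    exact lt_of_le_of_ne this.2 (hc j this.1)
  · rcases Nat.find_spec hP with hdt | hd
    · omega
    rcases hdj.eq_or_lt with rfl | hlt
    · exact hd
    · exact hd.trans (hs.strictMonoOn (Set.mem_Iio.2 (by omega)) (Set.mem_Iio.2 hjt) hlt)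

theorem mesas_subset_insertPair (hs : SortedPairsAfter s t w) (h : IsStirlingOn V (s + 2 * t) w)
    {c d : ℕ} (habove : ∀ j, d ≤ j → j < t → c < w (s + 2 * j + 1)) :
    mesas (s + 2 * t) w ⊆ mesas (s + 2 * t + 2) (StirlingPerm.insertPair w (s + 2 * d) c) := by
  rintro _ ⟨i, hi2, hiL, hi, rfl⟩
  have his := hs.add_one_le_of_isMesaAt h le_rfl hi2 hiL hi
  by_cases hid : i + 2 ≤ s + 2 * d
  · exact ⟨i, hi2, by omega, (isMesaAt_insertPair_of_le hid).2 hi, insertPair_of_le (by omega)⟩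
  · -- Only for `d = 0` can the new pair directly follow a mesa plateau; it stays below the mesa
    -- because `c` is below the bottom of the stack.
    obtain ⟨rfl, rfl⟩ : d = 0 ∧ s = i + 1 := by omega
    have hc : c < w i := by
      have := habove 0 le_rfl (by omega)
      rw [show i + 1 + 2 * 0 + 1 = i + 2 by ring] at this
      exact this.trans hi.2.2
    exact ⟨i, hi2, by omega, by simpa using hi.insertPair_of_lt hc, insertPair_of_le (by omega)⟩

end SortedPairsAfter

section DownwardClosed

variable {V : Finset ℕ} {L s t : ℕ} {w : ℕ → ℕ}

theorem exists_mesas_diff_subset_of_isMesaAt (h : IsStirlingOn V (L + 2) w)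
    (hs : SortedPairsAfter (s + 2) t w) (hL : s + 2 * t = L) {p : ℕ} (hp : IsMesaAt w p)
    (hp2 : 2 ≤ p) (hpL : p + 2 ≤ L + 2) :
    ∃ v, IsStirlingOn V (L + 2) v ∧ SortedPairsAfter s (t + 1) v ∧
      mesas (L + 2) w \ {w p} ⊆ mesas (L + 2) v := by
  subst hL
  have hps : p + 1 ≤ s + 2 := hs.add_one_le_of_isMesaAt h (by omega) hp2 (by omega) hp
  have hu : IsStirlingOn (V.erase (w p)) (s + 2 * t) (erasePair w (p - 1)) :=
    h.erasePair (by omega) (by rw [Nat.sub_add_cancel (by omega)])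
      (by rw [show p - 1 + 2 = p + 1 by omega]; exact hp.2.1.symm)
  have hus : SortedPairsAfter s t (erasePair w (p - 1)) := hs.erasePair (by omega)
  obtain ⟨d, hdt, hbelow, habove⟩ := hus.exists_insert_index (c := w p) fun j hj hjc =>
    (mem_erase.1 (hu.mem (s + 2 * j + 1) (by omega) (by omega))).1 hjc
  refine ⟨insertPair (erasePair w (p - 1)) (s + 2 * d) (w p), ?_, hus.insertPair hdt hbelow habove,
    fun m hm => hus.mesas_subset_insertPair hu habove
      (mem_mesas_erasePair hp hp2 (by omega) hm.1 hm.2)⟩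
  have := hu.insertPair (g := s + 2 * d) (notMem_erase (w p) V) (by omega)
    fun i j hi hid hdj hj heq => absurd heq (hus.ne_of_le_of_lt hu le_rfl hi hid hdj hj)
  rwa [insert_erase (h.mem p (by omega) (by omega))] at this

theorem exists_mesas_eq_of_subset {S : Set ℕ} (a : ℕ) :
    ∀ t w, 2 * a + 2 * t = L → IsStirlingOn V L w → SortedPairsAfter (2 * a) t w →
      S ⊆ mesas L w → ∃ v, IsStirlingOn V L v ∧ mesas L v = S := by
  induction a with
  | zero =>
    intro t w hL h hs hS
    refine ⟨w, h, subset_antisymm ?_ hS⟩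
    rintro _ ⟨i, hi2, hiL, hi, rfl⟩
    have := hs.add_one_le_of_isMesaAt h (by omega) hi2 (by omega) hi
    omega
  | succ a ih =>
    intro t w hL h hs hS
    by_cases hSw : mesas L w = S
    · exact ⟨w, h, hSw⟩
    obtain ⟨_, ⟨p, hp2, hpL, hp, rfl⟩, hpS⟩ := Set.exists_of_ssubset (ssubset_of_subset_of_ne hS
      (Ne.symm hSw))
    obtain ⟨L, rfl⟩ : ∃ L', L = L' + 2 := ⟨L - 2, by omega⟩
    rw [mul_add_one] at hs
    obtain ⟨v, hv, hvs, hwv⟩ :=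
      exists_mesas_diff_subset_of_isMesaAt h hs (by omega) hp hp2 hpL
    exact ih (t + 1) v (by omega) hv hvs fun m hm =>
      hwv ⟨hS hm, fun hmp => hpS (Set.mem_singleton_iff.1 hmp ▸ hm)⟩

end DownwardClosed

theorem mem_AMS_of_subset_mesas {n : ℕ} {w : ℕ → ℕ} {S : Set ℕ}
    (h : IsStirlingOn (Icc 1 n) (2 * n) w) (hS : S ⊆ mesas (2 * n) w) : S ∈ AMS n :=
  mem_AMS_iff.2 (exists_mesas_eq_of_subset n 0 w (by ring) h SortedPairsAfter.zero hS)

theorem exists_gap_avoiding_mesas {L : ℕ} (hL : 2 ≤ L) (hL3 : L % 3 ≠ 1) (w : ℕ → ℕ) :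
    ∃ g, 1 ≤ g ∧ g + 1 ≤ L ∧
      ∀ i, 2 ≤ i → i + 2 ≤ L → IsMesaAt w i → i + 2 ≤ g ∨ g + 2 ≤ i := by
  classical
  set I := (Icc 2 (L - 2)).filter (IsMesaAt w)
  have hI : I.card ≤ (L - 1) / 3 := by
    simpa using card_le_card_of_injOn (t := range ((L - 1) / 3)) (fun i => (i - 2) / 3)
      (fun i hi => by simp only [I, coe_filter, Set.mem_ofPred_eq, mem_Icc] at hi; simp; omega)
      (fun i hi j hj hij => by
        simp only [I, coe_filter, Set.mem_ofPred_eq, mem_Icc] at hi hj hij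
        rcases lt_trichotomy i j with hlt | heq | hgt
        · have := hi.2.add_three_le hj.2 hlt; omega
        · exact heq
        · have := hj.2.add_three_le hi.2 hgt; omega)
  set F := I.biUnion fun i => Icc (i - 1) (i + 1)
  have hF : F.card < (Icc 1 (L - 1)).card :=
    calc F.card ≤ ∑ i ∈ I, (Icc (i - 1) (i + 1)).card := card_biUnion_le
      _ = ∑ i ∈ I, 3 := sum_congr rfl fun i hi => by
        simp only [I, mem_filter, mem_Icc] at hi
        simp only [Nat.card_Icc]
        omega
      _ < (Icc 1 (L - 1)).card := by
        simp only [sum_const, smul_eq_mul, Nat.card_Icc]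
        omega
  obtain ⟨g, hg, hgF⟩ := exists_mem_notMem_of_card_lt_card hF
  rw [mem_Icc] at hg
  refine ⟨g, hg.1, by omega, fun i hi2 hiL hi => ?_⟩
  have : g ∉ Icc (i - 1) (i + 1) := fun hgi =>
    hgF (mem_biUnion.2 ⟨i, mem_filter.2 ⟨mem_Icc.2 ⟨hi2, by omega⟩, hi⟩, hgi⟩)
  rw [mem_Icc] at this
  omega

theorem IsStirlingOn.lt_add_one {n L : ℕ} {w : ℕ → ℕ} (h : IsStirlingOn (Icc 1 n) L w) {i : ℕ}
    (hi : 1 ≤ i) (hiL : i ≤ L) : w i < n + 1 :=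
  Nat.lt_succ_of_le (mem_Icc.1 (h.mem i hi hiL)).2

theorem IsStirlingOn.insertPair_top {n g : ℕ} {w : ℕ → ℕ} (h : IsStirlingOn (Icc 1 n) (2 * n) w)
    (hg : g ≤ 2 * n) :
    IsStirlingOn (Icc 1 (n + 1)) (2 * (n + 1)) (StirlingPerm.insertPair w g (n + 1)) := by
  rw [← insert_Icc_right_eq_Icc_add_one (by omega), mul_add_one]
  exact h.insertPair (by simp) hg fun i j hi hig _ _ _ => h.lt_add_one hi (by omega)

theorem AMS_succ_subset (n : ℕ) : AMS (n + 1) ⊆ AMS n ∪ insert (n + 1) '' AMS n := by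
  intro M hM
  obtain ⟨w, hw, rfl⟩ := mem_AMS_iff.1 hM
  rw [mul_add_one] at hw ⊢
  obtain ⟨g, hgL, h1, h2⟩ := hw.exists_pair_of_max (c := n + 1) (by simp) (by simp)
  have hu := hw.erasePair (by omega) h1 h2
  rw [Icc_erase_right, Ico_add_one_right_eq_Icc] at hu
  have hM' : mesas (2 * n + 2) w \ {n + 1} ∈ AMS n := by
    refine mem_AMS_of_subset_mesas hu fun m hm => ?_
    rw [← insertPair_erasePair h1 h2] at hm
    exact (mesas_insertPair_subset (fun i => hu.lt_add_one) (by omega) hm.1).resolve_left hm.2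
  by_cases htop : n + 1 ∈ mesas (2 * n + 2) w
  · exact .inr ⟨_, hM', by rw [Set.insert_sdiff_singleton, Set.insert_eq_of_mem htop]⟩
  · exact .inl (by rwa [Set.sdiff_singleton_eq_self htop] at hM')

theorem AMS_subset_AMS_succ (n : ℕ) : AMS n ⊆ AMS (n + 1) := by
  intro M hM
  obtain ⟨w, hw, rfl⟩ := mem_AMS_iff.1 hM
  refine mem_AMS_iff.2 ⟨_, hw.insertPair_top le_rfl, ?_⟩
  rw [mul_add_one]
  refine subset_antisymm (fun m hm => ?_) (subset_mesas_insertPair fun i _ hi _ => .inl hi)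
  exact (mesas_insertPair_subset (fun i => hw.lt_add_one) le_rfl hm).resolve_left fun hmn =>
    notMem_mesas_insertPair_end hw (by simp) (hmn ▸ hm)

theorem insert_mem_AMS_succ {n : ℕ} (hn : 1 ≤ n) (hn3 : n % 3 ≠ 2) {M : Set ℕ} (hM : M ∈ AMS n) :
    insert (n + 1) M ∈ AMS (n + 1) := by
  obtain ⟨w, hw, rfl⟩ := mem_AMS_iff.1 hM
  obtain ⟨g, hg1, hgL, havoid⟩ := exists_gap_avoiding_mesas (L := 2 * n) (by omega) (by omega) w
  refine mem_AMS_iff.2 ⟨_, hw.insertPair_top (g := g) (by omega), ?_⟩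
  rw [mul_add_one]
  exact subset_antisymm (mesas_insertPair_subset (fun i => hw.lt_add_one) (by omega))
    (Set.insert_subset (mem_mesas_insertPair_self hg1 hgL (hw.lt_add_one hg1 (by omega))
      (hw.lt_add_one (by omega) hgL)) (subset_mesas_insertPair havoid))

theorem AMS_succ {n : ℕ} (hn : 1 ≤ n) (hn3 : n % 3 ≠ 2) :
    AMS (n + 1) = AMS n ∪ insert (n + 1) '' AMS n :=
  subset_antisymm (AMS_succ_subset n) (Set.union_subset (AMS_subset_AMS_succ n)
    (Set.image_subset_iff.2 fun _ => insert_mem_AMS_succ hn hn3))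

theorem AMS_finite (n : ℕ) : (AMS n).Finite :=
  (Set.finite_Icc 1 n).finite_subsets.subset fun M hM => by
    obtain ⟨w, hw, rfl⟩ := mem_AMS_iff.1 hM
    simpa using hw.mesas_subset

theorem ncard_union_image_insert {α : Type*} {F : Set (Set α)} (hF : F.Finite) {x : α}
    (hx : ∀ M ∈ F, x ∉ M) : (F ∪ insert x '' F).ncard = 2 * F.ncard := by
  have hinj : Set.InjOn (insert x) F := fun M hM M' hM' h => by
    rw [← Set.insert_sdiff_self_of_notMem (hx M hM), h, Set.insert_sdiff_self_of_notMem (hx M' hM')]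
  have hdisj : Disjoint F (insert x '' F) := Set.disjoint_left.2 fun M hM ⟨M', _, hM'⟩ =>
    hx M hM (hM' ▸ Set.mem_insert x M')
  rw [Set.ncard_union_eq hdisj hF (hF.image _), hinj.ncard_image, two_mul]

theorem ncard_AMS_succ {n : ℕ} (hn : 1 ≤ n) (hn3 : n % 3 ≠ 2) :
    (AMS (n + 1)).ncard = 2 * (AMS n).ncard := by
  rw [AMS_succ hn hn3]
  refine ncard_union_image_insert (AMS_finite n) fun M hM hmem => ?_
  obtain ⟨w, hw, rfl⟩ := mem_AMS_iff.1 hM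
  simpa using hw.mesas_subset hmem

end StirlingPerm

theorem AMS_card_3k1 (k : ℕ) (hk : 1 ≤ k) :
    (AMS (3*k+1)).ncard = 2 * (AMS (3*k)).ncard :=
  StirlingPerm.ncard_AMS_succ (by omega) (by omega)
end

section
/- For every k ≥ 1, |AMS_{3k−1}| = 2|AMS_{3k−2}|. -/
/-!
A mesa of value `m` is a factor `a m m b` with `a, b < m`, and two mesas start at least three
positions apart. Among the `2 t` positions carrying a value `≤ t`, each mesa of value `≤ t`
owns three (`m m b`) and the leftmost one also the `a` before it, so a mesa set `M` satisfies
`3 · #{x ∈ M | x ≤ m} < 2 m` for every `m ∈ M`. Conversely, by induction on `n`, every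
`M ⊆ [2, n]` with these inequalities is a mesa set: realise `M \ {n}` in order `n - 1`, then
insert `n n` at the end, or, if `n ∈ M`, at a cut touching no mesa (one exists by the same
count). For `n ≡ 1 (mod 3)` the inequality `3 · #M < 2 n` sharpens to `3 · #M ≤ 2 n - 2`, so
`n + 1` may be added to any admissible set of order `n`: each one gives exactly two of order
`n + 1`.
-/

open Finset

def IsMesaAt (n : ℕ) (w : ℕ → ℕ) (i : ℕ) : Prop :=
  2 ≤ i ∧ i + 2 ≤ 2 * n ∧ w (i - 1) < w i ∧ w i = w (i + 1) ∧ w (i + 2) < w i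

instance (n : ℕ) (w : ℕ → ℕ) : DecidablePred (IsMesaAt n w) := fun _ => by
  unfold IsMesaAt; infer_instance

def mesaStarts (n : ℕ) (w : ℕ → ℕ) : Finset ℕ := (range (2 * n)).filter (IsMesaAt n w)

section Mesas

variable {n i j t : ℕ} {w : ℕ → ℕ}

@[simp]
lemma mem_mesaStarts : i ∈ mesaStarts n w ↔ IsMesaAt n w i := by
  simp only [mesaStarts, mem_filter, mem_range, and_iff_right_iff_imp]
  intro h
  have := h.2.1
  omega

lemma mesaSet_eq_image : MesaSet n w = w '' {i | IsMesaAt n w i} := by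
  ext m
  simp [MesaSet, IsMesaAt, and_assoc]

lemma mesaSet_eq_coe_image : MesaSet n w = ↑((mesaStarts n w).image w) := by
  rw [mesaSet_eq_image, coe_image]
  congr
  ext i
  simp

lemma IsMesaAt.add_three_le (hi : IsMesaAt n w i) (hj : IsMesaAt n w j) (hij : i < j) :
    i + 3 ≤ j := by
  obtain ⟨-, -, hi₁, hi₂, hi₃⟩ := hi
  obtain ⟨-, -, hj₁, -, -⟩ := hj
  rcases (by omega : j = i + 1 ∨ j = i + 2 ∨ i + 3 ≤ j) with rfl | rfl | h
  · simp only [Nat.add_sub_cancel] at hj₁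
    omega
  · rw [show i + 2 - 1 = i + 1 by omega] at hj₁
    omega
  · exact h

lemma IsStirling.one_le_apply (hw : IsStirling n w) (h1 : 1 ≤ i) (h2 : i ≤ 2 * n) :
    1 ≤ w i := (hw.2.1 i h1 h2).1

lemma IsStirling.apply_le (hw : IsStirling n w) (h1 : 1 ≤ i) (h2 : i ≤ 2 * n) :
    w i ≤ n := (hw.2.1 i h1 h2).2

lemma IsStirling.injOn_isMesaAt (hw : IsStirling n w) : Set.InjOn w {i | IsMesaAt n w i} := by
  suffices ∀ i j, IsMesaAt n w i → IsMesaAt n w j → i < j → w i ≠ w j by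
    intro i hi j hj hij
    by_contra hne
    rcases lt_or_gt_of_ne hne with h | h
    · exact this i j hi hj h hij
    · exact this j i hj hi h hij.symm
  intro i j hi hj hij heq
  have hsep := hi.add_three_le hj hij
  have := hw.2.2 i (i + 1) j (by have := hi.1; omega) (by omega) (by omega)
    (by have := hj.2.1; omega) heq
  have := hi.2.2.2.1
  omega

lemma IsStirling.card_mesaStarts_eq (hw : IsStirling n w) {M : Finset ℕ}
    (hM : MesaSet n w = M) : #(mesaStarts n w) = #M := by
  rw [mesaSet_eq_coe_image, coe_inj] at hM
  rw [← hM, card_image_of_injOn (hw.injOn_isMesaAt.mono fun i hi => mem_mesaStarts.1 hi)]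

lemma IsStirling.card_filter_apply_le (hw : IsStirling n w) (htn : t ≤ n) :
    #{p ∈ Icc 1 (2 * n) | w p ≤ t} = 2 * t := by
  have hmaps : ∀ p ∈ {p ∈ Icc 1 (2 * n) | w p ≤ t}, w p ∈ Icc 1 t := by
    intro p hp
    simp only [mem_filter, mem_Icc] at hp ⊢
    exact ⟨hw.one_le_apply hp.1.1 hp.1.2, hp.2⟩
  have hfiber : ∀ k ∈ Icc 1 t, #{p ∈ {p ∈ Icc 1 (2 * n) | w p ≤ t} | w p = k} = 2 := by
    intro k hk
    rw [mem_Icc] at hk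
    calc #{p ∈ {p ∈ Icc 1 (2 * n) | w p ≤ t} | w p = k}
        = #{p ∈ Icc 1 (2 * n) | w p = k} := by
          rw [filter_filter]
          exact congrArg card
            (filter_congr fun p _ => ⟨And.right, fun h => ⟨h ▸ hk.2, h⟩⟩)
      _ = 2 := hw.1 k hk.1 (hk.2.trans htn)
  rw [card_eq_sum_card_fiberwise hmaps, sum_congr rfl hfiber, sum_const, Nat.card_Icc,
    smul_eq_mul]
  omega

lemma IsStirling.three_mul_card_filter_mesaStarts_lt (hw : IsStirling n w) (ht : 1 ≤ t)
    (htn : t ≤ n) :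
    3 * #{i ∈ mesaStarts n w | w i ≤ t} < 2 * t := by
  set T := {i ∈ mesaStarts n w | w i ≤ t}
  have hT : ∀ i ∈ T, IsMesaAt n w i ∧ w i ≤ t := by simp [T]
  rcases T.eq_empty_or_nonempty with h | hne
  · rw [h, card_empty]; omega
  obtain ⟨hi₀, hi₀t⟩ := hT _ (T.min'_mem hne)
  set i₀ := T.min' hne
  have hdisj : (T : Set ℕ).PairwiseDisjoint fun i => Icc i (i + 2) := by
    intro i hi j hj hij
    have hsep : i + 3 ≤ j ∨ j + 3 ≤ i := by
      rcases lt_or_gt_of_ne hij with h | h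
      · exact .inl ((hT i hi).1.add_three_le (hT j hj).1 h)
      · exact .inr ((hT j hj).1.add_three_le (hT i hi).1 h)
    simp only [Function.onFun, disjoint_left, mem_Icc]
    omega
  have hfresh : i₀ - 1 ∉ T.biUnion fun i => Icc i (i + 2) := by
    simp only [mem_biUnion, mem_Icc, not_exists, not_and]
    intro i hi _
    have := T.min'_le i hi
    have := hi₀.1
    omega
  have hsub : insert (i₀ - 1) (T.biUnion fun i => Icc i (i + 2)) ⊆
      {p ∈ Icc 1 (2 * n) | w p ≤ t} := by
    intro p hp
    simp only [mem_insert, mem_biUnion, mem_Icc, mem_filter] at hp ⊢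
    rcases hp with rfl | ⟨i, hi, hp⟩
    · obtain ⟨h2, hle, hlt, -, -⟩ := hi₀
      exact ⟨⟨by omega, by omega⟩, by omega⟩
    · obtain ⟨⟨h2, hle, hlt, heq, hlt'⟩, hit⟩ := hT i hi
      rcases (by omega : p = i ∨ p = i + 1 ∨ p = i + 2) with rfl | rfl | rfl <;>
        exact ⟨⟨by omega, by omega⟩, by omega⟩
  have hcard := card_le_card hsub
  rw [card_insert_of_notMem hfresh, card_biUnion hdisj, hw.card_filter_apply_le htn,
    sum_congr rfl fun i _ => (by simp; omega : #(Icc i (i + 2)) = 3), sum_const,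
    smul_eq_mul] at hcard
  omega

lemma exists_free_cut (h : 3 * #(mesaStarts n w) + 1 < 2 * n) :
    ∃ c, 0 < c ∧ c < 2 * n ∧ ∀ i, IsMesaAt n w i → i + 1 < c ∨ c + 1 < i := by
  have hcard :
      #((mesaStarts n w).biUnion fun i => Icc (i - 1) (i + 1)) < #(Icc 1 (2 * n - 1)) :=
    calc _ ≤ ∑ i ∈ mesaStarts n w, #(Icc (i - 1) (i + 1)) := card_biUnion_le
      _ ≤ ∑ _i ∈ mesaStarts n w, 3 := sum_le_sum fun i _ => by simp only [Nat.card_Icc]; omega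
      _ < _ := by simp only [sum_const, smul_eq_mul, Nat.card_Icc]; omega
  obtain ⟨c, hc, hfree⟩ := exists_mem_notMem_of_card_lt_card hcard
  simp only [mem_biUnion, mem_Icc, mem_mesaStarts, not_exists, not_and] at hc hfree
  exact ⟨c, by omega, by omega, fun i hi => by have := hfree i hi; omega⟩

end Mesas

def admissibleSets (n : ℕ) : Finset (Finset ℕ) :=
  {M ∈ (Icc 2 n).powerset | ∀ m ∈ M, 3 * #{x ∈ M | x ≤ m} < 2 * m}

section Admissible

variable {n t : ℕ} {M : Finset ℕ}

lemma mem_admissibleSets : M ∈ admissibleSets n ↔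
    M ⊆ Icc 2 n ∧ ∀ m ∈ M, 3 * #{x ∈ M | x ≤ m} < 2 * m := by
  simp [admissibleSets]

lemma filter_le_eq_self (hM : M ⊆ Icc 2 n) (ht : n ≤ t) : {x ∈ M | x ≤ t} = M :=
  filter_true_of_mem fun x hx => by have := mem_Icc.1 (hM hx); omega

lemma filter_erase_le {a : ℕ} (ht : t < a) :
    {x ∈ M.erase a | x ≤ t} = {x ∈ M | x ≤ t} := by
  rw [filter_erase, erase_eq_of_notMem]
  simp only [mem_filter, not_and, not_le]
  exact fun _ => ht

lemma three_mul_card_le_of_mem_admissibleSets (hM : M ∈ admissibleSets n) :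
    3 * #M ≤ 2 * n := by
  obtain ⟨hsub, hbound⟩ := mem_admissibleSets.1 hM
  rcases M.eq_empty_or_nonempty with rfl | hne
  · simp
  · have hmax := hbound _ (M.max'_mem hne)
    rw [filter_true_of_mem fun x hx => M.le_max' x hx] at hmax
    have := mem_Icc.1 (hsub (M.max'_mem hne))
    omega

lemma succ_notMem_of_mem_admissibleSets (hM : M ∈ admissibleSets n) : n + 1 ∉ M := fun h => by
  have := mem_Icc.1 ((mem_admissibleSets.1 hM).1 h)
  omega

lemma mem_admissibleSets_succ_of_notMem (h : n + 1 ∉ M) :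
    M ∈ admissibleSets (n + 1) ↔ M ∈ admissibleSets n := by
  simp only [mem_admissibleSets]
  refine and_congr_left fun _ => ⟨fun hsub x hx => ?_, fun hsub => hsub.trans ?_⟩
  · have := mem_Icc.1 (hsub hx)
    have : x ≠ n + 1 := fun e => h (e ▸ hx)
    exact mem_Icc.2 (by omega)
  · exact Icc_subset_Icc_right (by omega)

lemma mem_admissibleSets_succ_of_mem (h : n + 1 ∈ M) :
    M ∈ admissibleSets (n + 1) ↔
      M.erase (n + 1) ∈ admissibleSets n ∧ 3 * #M < 2 * (n + 1) := by
  simp only [mem_admissibleSets]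
  constructor
  · rintro ⟨hsub, hbound⟩
    refine ⟨⟨fun x hx => ?_, fun x hx => ?_⟩, ?_⟩
    · have := mem_Icc.1 (hsub (mem_of_mem_erase hx))
      have := ne_of_mem_erase hx
      exact mem_Icc.2 (by omega)
    · have := mem_Icc.1 (hsub (mem_of_mem_erase hx))
      rw [filter_erase_le (by have := ne_of_mem_erase hx; omega)]
      exact hbound x (mem_of_mem_erase hx)
    · simpa [filter_le_eq_self hsub le_rfl] using hbound (n + 1) h
  · rintro ⟨⟨hsub, hbound⟩, hcard⟩
    have hsub' : M ⊆ Icc 2 (n + 1) := by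
      intro x hx
      rcases eq_or_ne x (n + 1) with rfl | hne
      · have := card_pos.2 ⟨_, hx⟩
        exact mem_Icc.2 ⟨by omega, le_rfl⟩
      · have := mem_Icc.1 (hsub (mem_erase.2 ⟨hne, hx⟩))
        exact mem_Icc.2 (by omega)
    refine ⟨hsub', fun x hx => ?_⟩
    rcases eq_or_ne x (n + 1) with rfl | hne
    · rwa [filter_le_eq_self hsub' le_rfl]
    · have hx' := mem_erase.2 ⟨hne, hx⟩
      have := mem_Icc.1 (hsub hx')
      rw [← filter_erase_le (by omega : x < n + 1)]
      exact hbound x hx'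

lemma card_admissibleSets_succ (hn : n % 3 = 1) :
    #(admissibleSets (n + 1)) = 2 * #(admissibleSets n) := by
  have hnotMem : {M ∈ admissibleSets (n + 1) | n + 1 ∉ M} = admissibleSets n := by
    ext M
    simp only [mem_filter]
    constructor
    · rintro ⟨hM, h⟩
      exact (mem_admissibleSets_succ_of_notMem h).1 hM
    · intro hM
      have h := succ_notMem_of_mem_admissibleSets hM
      exact ⟨(mem_admissibleSets_succ_of_notMem h).2 hM, h⟩
  have hmem : #{M ∈ admissibleSets (n + 1) | n + 1 ∈ M} = #(admissibleSets n) := by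
    refine card_nbij' (·.erase (n + 1)) (insert (n + 1)) ?_ ?_ ?_ ?_
    · intro M hM
      simp only [mem_coe, mem_filter] at hM
      exact ((mem_admissibleSets_succ_of_mem hM.2).1 hM.1).1
    · intro M hM
      have h := succ_notMem_of_mem_admissibleSets hM
      have := three_mul_card_le_of_mem_admissibleSets hM
      simp only [mem_coe, mem_filter, mem_insert_self, and_true]
      rw [mem_admissibleSets_succ_of_mem (mem_insert_self _ _), erase_insert h,
        card_insert_of_notMem h]
      exact ⟨hM, by omega⟩
    · intro M hM
      simp only [mem_coe, mem_filter] at hM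
      exact insert_erase hM.2
    · intro M hM
      exact erase_insert (succ_notMem_of_mem_admissibleSets hM)
  have := card_filter_add_card_filter_not (s := admissibleSets (n + 1)) (n + 1 ∈ ·)
  rw [hmem, hnotMem] at this
  omega

lemma IsStirling.image_mesaStarts_mem_admissibleSets {w : ℕ → ℕ} (hw : IsStirling n w) :
    (mesaStarts n w).image w ∈ admissibleSets n := by
  have hval : ∀ i, IsMesaAt n w i → 2 ≤ w i ∧ w i ≤ n := fun i hi => by
    obtain ⟨h2, hle, hlt, -, -⟩ := hi
    have := hw.one_le_apply (i := i - 1) (by omega) (by omega)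
    exact ⟨by omega, hw.apply_le (by omega) (by omega)⟩
  refine mem_admissibleSets.2 ⟨fun m hm => ?_, fun m hm => ?_⟩ <;>
    obtain ⟨i, hi, rfl⟩ := mem_image.1 hm <;> have := hval i (mem_mesaStarts.1 hi)
  · exact mem_Icc.2 this
  · rw [filter_image]
    exact (Nat.mul_le_mul_left 3 card_image_le).trans_lt
      (hw.three_mul_card_filter_mesaStarts_lt (by omega) this.2)

end Admissible

/-- `insertPair w c v` is `w` with the factor `v v` inserted at positions `c + 1, c + 2`; the
letter of `w` at position `p` moves to position `shift c p`. -/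
def insertPair (w : ℕ → ℕ) (c v : ℕ) (p : ℕ) : ℕ :=
  if p ≤ c then w p else if p ≤ c + 2 then v else w (p - 2)

def shift (c p : ℕ) : ℕ := if p ≤ c then p else p + 2

section InsertPair

variable {n c k p q v : ℕ} {w : ℕ → ℕ}

lemma shift_strictMono : StrictMono (shift c) := by
  intro p q h
  simp only [shift]
  split_ifs <;> omega

@[simp]
lemma insertPair_shift : insertPair w c v (shift c p) = w p := by
  unfold insertPair shift
  split_ifs <;> first | rfl | omega

lemma insertPair_of_le (h : p ≤ c) : insertPair w c v p = w p := if_pos h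

lemma insertPair_of_mid (h₁ : c < p) (h₂ : p ≤ c + 2) : insertPair w c v p = v := by
  rw [insertPair, if_neg (by omega), if_pos h₂]

lemma insertPair_of_lt (h : c + 2 < p) : insertPair w c v p = w (p - 2) := by
  rw [insertPair, if_neg (by omega), if_neg (by omega)]

lemma mid_or_exists_shift_eq (hc : c ≤ 2 * n) (hp₁ : 1 ≤ p) (hp₂ : p ≤ 2 * (n + 1)) :
    (c < p ∧ p ≤ c + 2) ∨ ∃ q, 1 ≤ q ∧ q ≤ 2 * n ∧ shift c q = p := by
  rcases Nat.lt_or_ge c p with h | h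
  · by_cases h' : p ≤ c + 2
    · exact .inl ⟨h, h'⟩
    · exact .inr ⟨p - 2, by omega, by omega, by simp only [shift]; split_ifs <;> omega⟩
  · exact .inr ⟨p, hp₁, by omega, if_pos h⟩

lemma shift_mem_Icc (hp : p ∈ Icc 1 (2 * n)) :
    shift c p ∈ Icc 1 (2 * (n + 1)) := by
  rw [mem_Icc] at hp ⊢
  simp only [shift]
  split_ifs <;> omega

lemma IsStirling.insertPair_shift_le (hw : IsStirling n w) (hq : q ∈ Icc 1 (2 * n)) :
    insertPair w c v (shift c q) ≤ n := by
  rw [insertPair_shift]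
  exact hw.apply_le (mem_Icc.1 hq).1 (mem_Icc.1 hq).2

lemma filter_insertPair_eq_image (hc : c ≤ 2 * n) (hk : k ≠ v) :
    {p ∈ Icc 1 (2 * (n + 1)) | insertPair w c v p = k} =
      {p ∈ Icc 1 (2 * n) | w p = k}.image (shift c) := by
  ext p
  simp only [mem_filter, mem_image]
  constructor
  · rintro ⟨hp, rfl⟩
    obtain ⟨hp₁, hp₂⟩ := mem_Icc.1 hp
    rcases mid_or_exists_shift_eq hc hp₁ hp₂ with hmid | ⟨q, hq₁, hq₂, rfl⟩
    · exact absurd (insertPair_of_mid hmid.1 hmid.2) hk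
    · exact ⟨q, ⟨mem_Icc.2 ⟨hq₁, hq₂⟩, by simp⟩, rfl⟩
  · rintro ⟨q, ⟨hq, rfl⟩, rfl⟩
    exact ⟨shift_mem_Icc hq, by simp⟩

lemma IsStirling.filter_insertPair_eq_Icc (hw : IsStirling n w) (hc : c ≤ 2 * n) :
    {p ∈ Icc 1 (2 * (n + 1)) | insertPair w c (n + 1) p = n + 1} = Icc (c + 1) (c + 2) := by
  ext p
  simp only [mem_filter, mem_Icc]
  constructor
  · rintro ⟨⟨hp₁, hp₂⟩, hp⟩
    rcases mid_or_exists_shift_eq hc hp₁ hp₂ with hmid | ⟨q, hq₁, hq₂, rfl⟩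
    · omega
    · have := hw.insertPair_shift_le (c := c) (v := n + 1) (mem_Icc.2 ⟨hq₁, hq₂⟩)
      omega
  · rintro ⟨h₁, h₂⟩
    exact ⟨⟨by omega, by omega⟩, insertPair_of_mid (by omega) h₂⟩

theorem isStirling_insertPair (hw : IsStirling n w) (hc : c ≤ 2 * n) :
    IsStirling (n + 1) (insertPair w c (n + 1)) := by
  have hlow {q : ℕ} (hq₁ : 1 ≤ q) (hq₂ : q ≤ 2 * n) :=
    hw.insertPair_shift_le (c := c) (v := n + 1) (mem_Icc.2 ⟨hq₁, hq₂⟩)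
  refine ⟨fun k hk₁ hk₂ => ?_, fun p hp₁ hp₂ => ?_, fun i j l hi hij hjl hl heq => ?_⟩
  · rcases Nat.lt_or_ge k (n + 1) with hk | hk
    · rw [filter_insertPair_eq_image hc hk.ne,
        card_image_of_injective _ shift_strictMono.injective, hw.1 k hk₁ (by omega)]
    · obtain rfl : k = n + 1 := by omega
      rw [hw.filter_insertPair_eq_Icc hc, Nat.card_Icc]
      omega
  · rcases mid_or_exists_shift_eq hc hp₁ hp₂ with hmid | ⟨q, hq₁, hq₂, rfl⟩
    · rw [insertPair_of_mid hmid.1 hmid.2]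
      omega
    · rw [insertPair_shift]
      exact ⟨hw.one_le_apply hq₁ hq₂, (hw.apply_le hq₁ hq₂).trans n.le_succ⟩
  rcases mid_or_exists_shift_eq hc hi (by omega) with himid | ⟨qi, hqi₁, hqi₂, rfl⟩ <;>
    rcases mid_or_exists_shift_eq hc (by omega) hl with hlmid | ⟨ql, hql₁, hql₂, rfl⟩
  · omega
  · rw [insertPair_of_mid himid.1 himid.2] at heq
    have := hlow hql₁ hql₂
    omega
  · rw [insertPair_of_mid hlmid.1 hlmid.2] at heq
    have := hlow hqi₁ hqi₂
    omega
  rcases mid_or_exists_shift_eq (p := j) hc (by omega) (by omega) with hjmid | ⟨qj, -, -, rfl⟩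
  · rw [insertPair_of_mid hjmid.1 hjmid.2]
    have := hlow hqi₁ hqi₂
    omega
  · rw [shift_strictMono.lt_iff_lt] at hij hjl
    simp only [insertPair_shift] at heq ⊢
    exact hw.2.2 qi qj ql hqi₁ hij hjl hql₂ heq

lemma isMesaAt_insertPair_iff_of_le {i : ℕ} (hc : c ≤ 2 * n) (hi : i + 2 ≤ c) :
    IsMesaAt (n + 1) (insertPair w c v) i ↔ IsMesaAt n w i := by
  simp only [IsMesaAt, insertPair_of_le (by omega : i - 1 ≤ c),
    insertPair_of_le (by omega : i ≤ c), insertPair_of_le (by omega : i + 1 ≤ c),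
    insertPair_of_le hi]
  omega

lemma isMesaAt_insertPair_add_two_iff {i : ℕ} (hi : c + 2 ≤ i) :
    IsMesaAt (n + 1) (insertPair w c v) (i + 2) ↔ IsMesaAt n w i := by
  have e₁ : insertPair w c v (i + 2 - 1) = w (i - 1) := by
    rw [insertPair_of_lt (by omega)]; congr 1
  have e₂ : insertPair w c v (i + 2) = w i := by
    rw [insertPair_of_lt (by omega)]; rfl
  have e₃ : insertPair w c v (i + 2 + 1) = w (i + 1) := by
    rw [insertPair_of_lt (by omega)]; rfl
  have e₄ : insertPair w c v (i + 2 + 2) = w (i + 2) := by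
    rw [insertPair_of_lt (by omega)]; rfl
  simp only [IsMesaAt, e₁, e₂, e₃, e₄]
  omega

lemma isMesaAt_insertPair_succ (hw : IsStirling n w) (hc₀ : 0 < c) (hc : c < 2 * n) :
    IsMesaAt (n + 1) (insertPair w c (n + 1)) (c + 1) := by
  have := hw.apply_le (i := c) (by omega) (by omega)
  have := hw.apply_le (i := c + 1) (by omega) (by omega)
  refine ⟨by omega, by omega, ?_, ?_, ?_⟩
  · rw [Nat.add_sub_cancel, insertPair_of_le le_rfl, insertPair_of_mid (p := c + 1) (by omega)
      (by omega)]
    omega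
  · rw [insertPair_of_mid (p := c + 1) (by omega) (by omega),
      insertPair_of_mid (p := c + 1 + 1) (by omega) (by omega)]
  · rw [insertPair_of_mid (p := c + 1) (by omega) (by omega),
      insertPair_of_lt (p := c + 1 + 2) (by omega)]
    exact Nat.lt_succ_of_le this

lemma not_isMesaAt_insertPair {i : ℕ} (hw : IsStirling n w) (h₁ : c ≤ i + 1)
    (h₂ : i ≤ c + 3) (hne : i ≠ c + 1) : ¬IsMesaAt (n + 1) (insertPair w c (n + 1)) i := by
  rintro ⟨h2, hle, hlt, heq, hlt'⟩
  rcases (by omega : i + 1 = c ∨ i = c ∨ i = c + 2 ∨ i = c + 3) with rfl | rfl | rfl | rfl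
  · rw [insertPair_of_le (p := i) (by omega),
      insertPair_of_mid (p := i + 2) (by omega) (by omega)] at hlt'
    have := hw.apply_le (i := i) (by omega) (by omega)
    omega
  · rw [insertPair_of_le le_rfl, insertPair_of_mid (p := i + 1) (by omega) (by omega)] at heq
    have := hw.apply_le (i := i) (by omega) (by omega)
    omega
  · rw [insertPair_of_mid (p := c + 2) (by omega) le_rfl,
      insertPair_of_lt (p := c + 2 + 1) (by omega)] at heq
    have := hw.apply_le (i := c + 2 + 1 - 2) (by omega) (by omega)
    omega
  · rw [insertPair_of_mid (p := c + 3 - 1) (by omega) (by omega),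
      insertPair_of_lt (p := c + 3) (by omega)] at hlt
    have := hw.apply_le (i := c + 3 - 2) (by omega) (by omega)
    omega

lemma mem_mesaSet_insertPair {m : ℕ} (hw : IsStirling n w) (hc : c ≤ 2 * n)
    (hfree : ∀ i, IsMesaAt n w i → i + 1 < c ∨ c + 1 < i) :
    m ∈ MesaSet (n + 1) (insertPair w c (n + 1)) ↔
      m ∈ MesaSet n w ∨ (m = n + 1 ∧ 0 < c ∧ c < 2 * n) := by
  simp only [mesaSet_eq_image, Set.mem_image, Set.mem_ofPred_eq]
  constructor
  · rintro ⟨q, hq, rfl⟩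
    rcases (by omega : q + 2 ≤ c ∨ c + 4 ≤ q ∨ q = c + 1 ∨
        (c ≤ q + 1 ∧ q ≤ c + 3 ∧ q ≠ c + 1)) with h | h | rfl | h
    · exact .inl ⟨q, (isMesaAt_insertPair_iff_of_le hc h).1 hq,
        (insertPair_of_le (by omega)).symm⟩
    · obtain ⟨i, rfl⟩ : ∃ i, q = i + 2 := ⟨q - 2, by omega⟩
      refine .inl ⟨i, (isMesaAt_insertPair_add_two_iff (by omega)).1 hq, ?_⟩
      rw [insertPair_of_lt (by omega)]
      rfl
    · exact .inr ⟨insertPair_of_mid (by omega) (by omega), by have := hq.1; omega,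
        by have := hq.2.1; omega⟩
    · exact absurd hq (not_isMesaAt_insertPair hw h.1 h.2.1 h.2.2)
  · rintro (⟨i, hi, rfl⟩ | ⟨rfl, hc₀, hc₁⟩)
    · rcases hfree i hi with h | h
      · exact ⟨i, (isMesaAt_insertPair_iff_of_le hc (by omega)).2 hi,
          insertPair_of_le (by omega)⟩
      · refine ⟨i + 2, (isMesaAt_insertPair_add_two_iff (by omega)).2 hi, ?_⟩
        rw [insertPair_of_lt (by omega)]
        rfl
    · exact ⟨c + 1, isMesaAt_insertPair_succ hw hc₀ hc₁,
        insertPair_of_mid (by omega) (by omega)⟩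

end InsertPair

theorem exists_isStirling_mesaSet_eq {n : ℕ} {M : Finset ℕ} (hM : M ∈ admissibleSets n) :
    ∃ w, IsStirling n w ∧ MesaSet n w = M := by
  induction n generalizing M with
  | zero =>
    obtain rfl : M = ∅ := subset_empty.1 (by simpa using (mem_admissibleSets.1 hM).1)
    refine ⟨fun _ => 0, by refine ⟨?_, ?_, ?_⟩ <;> intros <;> omega, ?_⟩
    ext m
    simp only [MesaSet, Set.mem_ofPred_eq, coe_empty, Set.mem_empty_iff_false, iff_false]
    omega
  | succ n ih =>
    by_cases h : n + 1 ∈ M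
    · obtain ⟨hM', hcard⟩ := (mem_admissibleSets_succ_of_mem h).1 hM
      obtain ⟨w, hw, hwM⟩ := ih hM'
      have hstarts := hw.card_mesaStarts_eq hwM
      rw [card_erase_of_mem h] at hstarts
      have := card_pos.2 ⟨_, h⟩
      obtain ⟨c, hc₀, hc, hfree⟩ := exists_free_cut (n := n) (w := w) (by omega)
      refine ⟨_, isStirling_insertPair hw hc.le, ?_⟩
      ext m
      rw [mem_mesaSet_insertPair hw hc.le hfree, hwM]
      by_cases hm : m = n + 1 <;> simp [hm, h, hc₀, hc]
    · obtain ⟨w, hw, hwM⟩ := ih ((mem_admissibleSets_succ_of_notMem h).1 hM)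
      refine ⟨_, isStirling_insertPair hw le_rfl, ?_⟩
      ext m
      rw [mem_mesaSet_insertPair hw le_rfl fun i hi => .inl (by have := hi.2.1; omega), hwM]
      simp

theorem AMS_eq_image (n : ℕ) :
    AMS n = (fun M : Finset ℕ => (M : Set ℕ)) '' admissibleSets n := by
  ext S
  constructor
  · rintro ⟨w, hw, rfl⟩
    exact ⟨_, hw.image_mesaStarts_mem_admissibleSets, mesaSet_eq_coe_image.symm⟩
  · rintro ⟨M, hM, rfl⟩
    exact exists_isStirling_mesaSet_eq hM

theorem ncard_AMS (n : ℕ) : (AMS n).ncard = #(admissibleSets n) := by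
  rw [AMS_eq_image, Set.ncard_image_of_injective _ coe_injective, Set.ncard_coe_finset]

theorem AMS_card_3km1 (k : ℕ) (hk : 1 ≤ k) :
    (AMS (3*k-1)).ncard = 2 * (AMS (3*k-2)).ncard := by
  obtain ⟨n, hn, h₁, h₂⟩ : ∃ n, n % 3 = 1 ∧ 3 * k - 1 = n + 1 ∧ 3 * k - 2 = n :=
    ⟨3 * k - 2, by omega, by omega, rfl⟩
  rw [h₁, h₂, ncard_AMS, ncard_AMS, card_admissibleSets_succ hn]
end
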